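/- arXiv:2306.12848 — 10 statements merged into one kernel-verified Lean document; each statement's English description precedes it below -/
import Mathlib

section
/- If an [n,k] linear code C over a finite field F_q is NMDS, then its dual code C⊥ (an [n, n−k] code) is also NMDS. -/
/-- The `r`-th generalized Hamming weight of a linear code `C ⊆ F^n`:
the minimal support size of an `r`-dimensional subcode of `C`. -/
noncomputable def ghw {F : Type*} [Field F] {n : ℕ} (C : Submodule F (Fin n → F)) (r : ℕ) : ℕ :=
  sInf {d | ∃ D : Submodule F (Fin n → F), D ≤ C ∧ Module.finrank F D = r ∧
    {i : Fin n | ∃ x ∈ D, x i ≠ 0}.ncard = d}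

/-- A linear `[n,k]` code `C` is NMDS if `d₁(C) = n - k` and `dᵢ(C) = n - k + i`
for `i = 2, …, k`. -/
def IsNMDSCode {F : Type*} [Field F] {n : ℕ} (C : Submodule F (Fin n → F)) (k : ℕ) : Prop :=
  ghw C 1 = n - k ∧ ∀ i : ℕ, 2 ≤ i → i ≤ k → ghw C i = n - k + i

/-- The dual code `C⊥ = {x : ∑ i, x i * c i = 0 for all c ∈ C}`. -/
def dualCode {F : Type*} [Field F] {n : ℕ} (C : Submodule F (Fin n → F)) :
    Submodule F (Fin n → F) where
  carrier := {x | ∀ c ∈ C, ∑ i, x i * c i = 0}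
  zero_mem' := by intro c hc; simp
  add_mem' := by
    intro a b ha hb c hc
    simp only [Set.mem_setOf_eq] at ha hb ⊢
    simp [Pi.add_apply, add_mul, Finset.sum_add_distrib, ha c hc, hb c hc]
  smul_mem' := by
    intro t a ha c hc
    simp only [Set.mem_setOf_eq] at ha ⊢
    simp [Pi.smul_apply, smul_eq_mul, mul_assoc, ← Finset.mul_sum, ha c hc]

open Module

section NMDSAux
variable {F : Type*} [Field F] {n : ℕ}

/-- The submodule of vectors supported inside `I`. -/
def VI (F : Type*) [Field F] {n : ℕ} (I : Finset (Fin n)) : Submodule F (Fin n → F) where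
  carrier := {x | ∀ i ∉ I, x i = 0}
  zero_mem' := by intro i _; rfl
  add_mem' := by intro a b ha hb i hi; simp [ha i hi, hb i hi]
  smul_mem' := by intro c a ha i hi; simp [ha i hi]

lemma mem_VI {I : Finset (Fin n)} {x : Fin n → F} : x ∈ VI F I ↔ ∀ i ∉ I, x i = 0 := Iff.rfl

lemma VI_univ : VI F (Finset.univ : Finset (Fin n)) = ⊤ := by
  ext x; simp [mem_VI]

lemma finrank_VI (I : Finset (Fin n)) : finrank F (VI F I) = I.card := by
  classical
  set f : (Fin n → F) →ₗ[F] ({i : Fin n // i ∈ Iᶜ} → F) :=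
    LinearMap.funLeft F F (fun i => (i : Fin n))
  have hker : VI F I = LinearMap.ker f := by
    ext x
    simp only [mem_VI, LinearMap.mem_ker, funext_iff, LinearMap.funLeft_apply, f,
      Pi.zero_apply]
    constructor
    · rintro h ⟨i, hi⟩
      exact h i (Finset.mem_compl.mp hi)
    · intro h i hi
      exact h ⟨i, Finset.mem_compl.mpr hi⟩
  have hsurj : Function.Surjective f :=
    LinearMap.funLeft_surjective_of_injective F F _ Subtype.val_injective
  have hrange : LinearMap.range f = ⊤ := LinearMap.range_eq_top.mpr hsurj
  have hrn := LinearMap.finrank_range_add_finrank_ker f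
  rw [hrange] at hrn
  have h1 : finrank F (⊤ : Submodule F ({i : Fin n // i ∈ Iᶜ} → F)) = n - I.card := by
    rw [finrank_top, Module.finrank_pi, Fintype.card_coe, Finset.card_compl, Fintype.card_fin]
  have h2 : finrank F (Fin n → F) = n := Module.finrank_fin_fun F
  have h3 : I.card ≤ n := by simpa using Finset.card_le_univ I
  rw [hker]
  omega

/-- The standard dot-product bilinear form. -/
noncomputable def dotB (F : Type*) [Field F] (n : ℕ) : LinearMap.BilinForm F (Fin n → F) :=
  LinearMap.mk₂ F (fun x y => ∑ i, x i * y i)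
    (fun a b c => by simp [add_mul, Finset.sum_add_distrib])
    (fun t a c => by simp [Finset.mul_sum, mul_assoc])
    (fun a b c => by simp [mul_add, Finset.sum_add_distrib])
    (fun t a c => by simp [Finset.mul_sum, mul_assoc, mul_left_comm])

lemma dotB_apply (x y : Fin n → F) : dotB F n x y = ∑ i, x i * y i := rfl

lemma dotB_refl : (dotB F n).IsRefl := by
  intro x y h
  rw [dotB_apply] at h ⊢
  rw [← h]
  exact Finset.sum_congr rfl fun i _ => mul_comm _ _

lemma dotB_single (i : Fin n) (x : Fin n → F) : dotB F n (Pi.single i 1) x = x i := by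
  rw [dotB_apply, Finset.sum_eq_single i]
  · simp
  · intro j _ hj; simp [Pi.single_eq_of_ne hj]
  · simp

lemma dotB_nondeg : (dotB F n).Nondegenerate := by
  refine (LinearMap.IsRefl.nondegenerate_iff_separatingLeft (B := dotB F n) (fun x y h => dotB_refl x y h)).mpr ?_
  intro x hx
  funext i
  have h := dotB_refl x (Pi.single i 1) (hx (Pi.single i 1))
  rw [dotB_single] at h
  simpa using h

lemma orth_VI (I : Finset (Fin n)) : (dotB F n).orthogonal (VI F I) = VI F Iᶜ := by
  ext x
  simp only [LinearMap.BilinForm.mem_orthogonal_iff, LinearMap.BilinForm.isOrtho_def, mem_VI,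
    Finset.mem_compl, not_not]
  constructor
  · intro hx i hi
    have h1 : (Pi.single i (1 : F)) ∈ VI F I := by
      intro j hj
      apply Pi.single_eq_of_ne
      rintro rfl
      exact hj hi
    have h2 := hx _ h1
    rwa [dotB_single] at h2
  · intro hx y hy
    rw [dotB_apply]
    apply Finset.sum_eq_zero
    intro i _
    by_cases hi : i ∈ I
    · rw [hx i hi, mul_zero]
    · rw [hy i hi, zero_mul]

lemma mem_dualCode {C : Submodule F (Fin n → F)} {x : Fin n → F} :
    x ∈ dualCode C ↔ ∀ c ∈ C, ∑ i, x i * c i = 0 := Iff.rfl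

lemma dualCode_eq_orth (C : Submodule F (Fin n → F)) :
    dualCode C = (dotB F n).orthogonal C := by
  ext x
  simp only [mem_dualCode, LinearMap.BilinForm.mem_orthogonal_iff,
    LinearMap.BilinForm.isOrtho_def, dotB_apply]
  constructor
  · intro hx c hc
    rw [← hx c hc]
    exact Finset.sum_congr rfl fun i _ => mul_comm _ _
  · intro hx c hc
    rw [← hx c hc]
    exact Finset.sum_congr rfl fun i _ => mul_comm _ _

lemma orth_sup (B : LinearMap.BilinForm F (Fin n → F)) (W₁ W₂ : Submodule F (Fin n → F)) :
    B.orthogonal (W₁ ⊔ W₂) = B.orthogonal W₁ ⊓ B.orthogonal W₂ := by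
  ext x
  simp only [Submodule.mem_inf, LinearMap.BilinForm.mem_orthogonal_iff,
    LinearMap.BilinForm.isOrtho_def]
  constructor
  · intro hx
    exact ⟨fun y hy => hx y (Submodule.mem_sup_left hy),
      fun y hy => hx y (Submodule.mem_sup_right hy)⟩
  · rintro ⟨ha, hb⟩ y hy
    obtain ⟨a, haW, b, hbW, rfl⟩ := Submodule.mem_sup.mp hy
    rw [map_add, LinearMap.add_apply, ha a haW, hb b hbW, add_zero]

/-- The key duality identity. -/
lemma star_id (C : Submodule F (Fin n → F)) (J : Finset (Fin n)) :
    finrank F ↥(C ⊓ VI F Jᶜ) + J.card = finrank F C + finrank F ↥(dualCode C ⊓ VI F J) := by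
  classical
  have h1 := Submodule.finrank_sup_add_finrank_inf_eq C (VI F Jᶜ)
  have h2 : finrank F ↥(VI F Jᶜ) = n - J.card := by
    rw [finrank_VI, Finset.card_compl, Fintype.card_fin]
  have h3 : dualCode C ⊓ VI F J = (dotB F n).orthogonal (C ⊔ VI F Jᶜ) := by
    rw [orth_sup, dualCode_eq_orth, orth_VI, compl_compl]
  have h4 : finrank F ↥((dotB F n).orthogonal (C ⊔ VI F Jᶜ)) =
      finrank F (Fin n → F) - finrank F ↥(C ⊔ VI F Jᶜ) :=
    LinearMap.BilinForm.finrank_orthogonal dotB_nondeg _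
  have h5 : finrank F ↥(C ⊔ VI F Jᶜ) ≤ finrank F (Fin n → F) := Submodule.finrank_le _
  have h6 : J.card ≤ n := by simpa using Finset.card_le_univ J
  have h7 : finrank F (Fin n → F) = n := Module.finrank_fin_fun F
  rw [h3, h4]
  omega

/-- The set of cardinalities of coordinate sets supporting an `r`-dimensional subcode. -/
def Sset (C : Submodule F (Fin n → F)) (r : ℕ) : Set ℕ :=
  {t | ∃ I : Finset (Fin n), I.card = t ∧ r ≤ finrank F ↥(C ⊓ VI F I)}

lemma sInf_eq_sInf' {A B : Set ℕ} (hAB : ∀ a ∈ A, ∃ b ∈ B, b ≤ a)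
    (hBA : ∀ b ∈ B, ∃ a ∈ A, a ≤ b) : sInf A = sInf B := by
  rcases A.eq_empty_or_nonempty with hA | hA
  · have hB : B = ∅ := by
      rw [Set.eq_empty_iff_forall_notMem]
      intro b hb
      obtain ⟨a, ha, _⟩ := hBA b hb
      rw [hA] at ha
      exact ha
    rw [hA, hB]
  · have hB : B.Nonempty := by
      obtain ⟨a, ha⟩ := hA
      obtain ⟨b, hb, _⟩ := hAB a ha
      exact ⟨b, hb⟩
    apply le_antisymm
    · obtain ⟨a, ha, hle⟩ := hBA _ (Nat.sInf_mem hB)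
      exact le_trans (Nat.sInf_le ha) hle
    · obtain ⟨b, hb, hle⟩ := hAB _ (Nat.sInf_mem hA)
      exact le_trans (Nat.sInf_le hb) hle

lemma exists_submodule_of_finrank (W : Submodule F (Fin n → F)) (r : ℕ)
    (hr : r ≤ finrank F W) :
    ∃ D : Submodule F (Fin n → F), D ≤ W ∧ finrank F ↥D = r := by
  classical
  let b := finBasis F ↥W
  let v : Fin r → (Fin n → F) := fun j => (b (Fin.castLE hr j) : Fin n → F)
  have hli : LinearIndependent F v := by
    have h1 : LinearIndependent F (fun j : Fin r => b (Fin.castLE hr j)) :=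
      b.linearIndependent.comp _ (Fin.castLE_injective hr)
    exact h1.map' W.subtype (Submodule.ker_subtype W)
  refine ⟨Submodule.span F (Set.range v), ?_, ?_⟩
  · rw [Submodule.span_le]
    rintro _ ⟨j, rfl⟩
    exact (b (Fin.castLE hr j)).2
  · rw [finrank_span_eq_card hli, Fintype.card_fin]

lemma ghw_eq (C : Submodule F (Fin n → F)) (r : ℕ) : ghw C r = sInf (Sset C r) := by
  classical
  apply sInf_eq_sInf'
  · rintro d ⟨D, hDC, hDr, hDd⟩
    have hfin : {i : Fin n | ∃ x ∈ D, x i ≠ 0}.Finite := Set.toFinite _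
    refine ⟨hfin.toFinset.card, ⟨hfin.toFinset, rfl, ?_⟩, ?_⟩
    · rw [← hDr]
      apply Submodule.finrank_mono
      refine le_inf hDC ?_
      intro x hx i hi
      rw [Set.Finite.mem_toFinset] at hi
      by_contra hxi
      exact hi ⟨x, hx, hxi⟩
    · rw [← hDd, Set.ncard_eq_toFinset_card _ hfin]
  · rintro t ⟨I, hIt, hIr⟩
    obtain ⟨D, hDle, hDr⟩ := exists_submodule_of_finrank (C ⊓ VI F I) r hIr
    refine ⟨{i : Fin n | ∃ x ∈ D, x i ≠ 0}.ncard, ⟨D, le_trans hDle inf_le_left, hDr, rfl⟩, ?_⟩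
    have hsub : {i : Fin n | ∃ x ∈ D, x i ≠ 0} ⊆ ↑I := by
      intro i hi
      obtain ⟨x, hx, hxi⟩ := hi
      by_contra hiI
      exact hxi ((le_trans hDle inf_le_right) hx i hiI)
    calc {i : Fin n | ∃ x ∈ D, x i ≠ 0}.ncard ≤ (↑I : Set (Fin n)).ncard :=
          Set.ncard_le_ncard hsub (Set.toFinite _)
      _ = I.card := by rw [Set.ncard_coe_finset]
      _ = t := hIt

end NMDSAux

/-- the dual of an `[n,k]` NMDS code is an `[n, n-k]` NMDS code. -/
theorem dualCode_isNMDSCode {F : Type*} [Field F] [Fintype F] {n k : ℕ}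
    (hkn : k ≤ n) (C : Submodule F (Fin n → F)) (hC : Module.finrank F C = k)
    (h : IsNMDSCode C k) : IsNMDSCode (dualCode C) (n - k) := by
  classical
  obtain ⟨h1, h2⟩ := h
  rw [ghw_eq] at h1
  by_cases hk : k = 0
  · subst hk
    have hempty : Sset C 1 = ∅ := by
      rw [Set.eq_empty_iff_forall_notMem]
      rintro t ⟨I, hIt, hIr⟩
      have hle : finrank F ↥(C ⊓ VI F I) ≤ finrank F C := Submodule.finrank_mono inf_le_left
      omega
    rw [hempty, Nat.sInf_empty] at h1
    have hn : n = 0 := by omega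
    subst hn
    constructor
    · rw [ghw_eq]
      have hD : Sset (dualCode C) 1 = ∅ := by
        rw [Set.eq_empty_iff_forall_notMem]
        rintro t ⟨I, hIt, hIr⟩
        have hle : finrank F ↥(dualCode C ⊓ VI F I) ≤ finrank F (Fin 0 → F) :=
          Submodule.finrank_le _
        rw [Module.finrank_fin_fun F] at hle
        omega
      rw [hD, Nat.sInf_empty]
    · intro i hi2 hi0
      omega
  · have hk1 : 1 ≤ k := Nat.one_le_iff_ne_zero.mpr hk
    have hfinC : ∀ I : Finset (Fin n), finrank F ↥(C ⊓ VI F I) ≤ k := by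
      intro I
      rw [← hC]
      exact Submodule.finrank_mono inf_le_left
    have c1 : ∀ I : Finset (Fin n), 1 ≤ finrank F ↥(C ⊓ VI F I) → n - k ≤ I.card := by
      intro I hI
      by_contra hlt
      push_neg at hlt
      exact Nat.notMem_of_lt_sInf (s := Sset C 1) (by rw [h1]; exact hlt)
        ⟨I, rfl, hI⟩
    have c2 : ∀ I : Finset (Fin n), 2 ≤ finrank F ↥(C ⊓ VI F I) →
        n - k + finrank F ↥(C ⊓ VI F I) ≤ I.card := by
      intro I hI
      have hmk : finrank F ↥(C ⊓ VI F I) ≤ k := hfinC I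
      have hgm := h2 _ hI hmk
      rw [ghw_eq] at hgm
      by_contra hlt
      push_neg at hlt
      exact Nat.notMem_of_lt_sInf (s := Sset C (finrank F ↥(C ⊓ VI F I)))
        (by rw [hgm]; exact hlt) ⟨I, rfl, le_refl _⟩
    have hcard : ∀ J : Finset (Fin n), J.card ≤ n := fun J => by
      simpa using Finset.card_le_univ J
    have hstar : ∀ J : Finset (Fin n),
        finrank F ↥(C ⊓ VI F Jᶜ) + J.card = k + finrank F ↥(dualCode C ⊓ VI F J) := by
      intro J
      rw [← hC]
      exact star_id C J
    have hcompl : ∀ J : Finset (Fin n), (Jᶜ : Finset (Fin n)).card = n - J.card := by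
      intro J
      rw [Finset.card_compl, Fintype.card_fin]
    constructor
    · rw [ghw_eq]
      have hnk : n - (n - k) = k := by omega
      rw [hnk]
      have hne : (Sset C 1).Nonempty := by
        refine ⟨n, Finset.univ, by simp, ?_⟩
        rw [VI_univ, inf_top_eq, hC]
        exact hk1
      have hmemC : n - k ∈ Sset C 1 := h1 ▸ Nat.sInf_mem hne
      obtain ⟨I, hIcard, hIr⟩ := hmemC
      have hs := hstar Iᶜ
      rw [compl_compl] at hs
      have hJc := hcompl I
      have hIn := hcard I
      have hmemD : k ∈ Sset (dualCode C) 1 := ⟨Iᶜ, by omega, by omega⟩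
      apply le_antisymm (Nat.sInf_le hmemD)
      apply le_csInf ⟨k, hmemD⟩
      rintro t ⟨J, hJt, hJr⟩
      have hs2 := hstar J
      have hcJ := hcard J
      have hcJc := hcompl J
      have hm3 : finrank F ↥(C ⊓ VI F Jᶜ) = 0 ∨ finrank F ↥(C ⊓ VI F Jᶜ) = 1 ∨
          2 ≤ finrank F ↥(C ⊓ VI F Jᶜ) := by omega
      rcases hm3 with hm | hm | hm
      · omega
      · have := c1 Jᶜ (by omega)
        omega
      · have := c2 Jᶜ hm
        omega
    · intro i hi2 hik
      rw [ghw_eq]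
      have hgoal : n - (n - k) + i = k + i := by omega
      rw [hgoal]
      obtain ⟨J₀, _, hJ₀card⟩ := Finset.exists_subset_card_eq
        (show k + i ≤ (Finset.univ : Finset (Fin n)).card by
          rw [Finset.card_univ, Fintype.card_fin]; omega)
      have hs0 := hstar J₀
      have hmemD : k + i ∈ Sset (dualCode C) i := ⟨J₀, hJ₀card, by omega⟩
      apply le_antisymm (Nat.sInf_le hmemD)
      apply le_csInf ⟨_, hmemD⟩
      rintro t ⟨J, hJt, hJr⟩
      have hs2 := hstar J
      have hcJ := hcard J
      have hcJc := hcompl J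
      have hm3 : finrank F ↥(C ⊓ VI F Jᶜ) = 0 ∨ finrank F ↥(C ⊓ VI F Jᶜ) = 1 ∨
          2 ≤ finrank F ↥(C ⊓ VI F Jᶜ) := by omega
      rcases hm3 with hm | hm | hm
      · omega
      · have := c1 Jᶜ (by omega)
        omega
      · have := c2 Jᶜ hm
        omega
end

section
/- Let F_q be a finite field and let x_1, …, x_{2n} ∈ F_q be 2n pairwise distinct elements such that Σ_{i∈R} x_i ≠ 0 for every subset R ⊆ {1, …, 2n} with |R| = n. Let V_1 = V_⊥((x_1, …, x_n); {n−1}) and V_2 = V_⊥((x_{n+1}, …, x_{2n}); {n−1}). Then V_1 and V_2 are invertible, and every square submatrix of V_1^{-1}V_2 and of V_2^{-1}V_1 is nonsingular; in particular V_1^{-1}V_2 and V_2^{-1}V_1 are MDS matrices. -/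
/-- Generalized Vandermonde matrix: `(i,j)` entry `x j ^ e i`, where `e` lists
the row exponents in increasing order. -/
def gvand {F : Type*} [Field F] {n : ℕ} (x : Fin n → F) (e : Fin n → ℕ) :
    Matrix (Fin n) (Fin n) F :=
  Matrix.of fun i j => x j ^ e i

/-- Row exponents `0, 1, …, n-2, n` of `V_⊥(x; {n-1})`. -/
def expOmitPen (n : ℕ) (i : Fin n) : ℕ := if (i : ℕ) = n - 1 then n else (i : ℕ)

/-- Row exponents `0, 2, 3, …, n` of `V_⊥(x; {1})`. -/
def expOmitOne (n : ℕ) (i : Fin n) : ℕ := if (i : ℕ) = 0 then 0 else (i : ℕ) + 1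

/-- Row exponents `0, 2, 3, …, n-1, n+1` of `V_⊥(x; {1,n})`. -/
def expOmitOneN (n : ℕ) (i : Fin n) : ℕ :=
  if (i : ℕ) = 0 then 0 else if (i : ℕ) = n - 1 then n + 1 else (i : ℕ) + 1

/-- A square matrix is MDS if every square submatrix of it is nonsingular. -/
def IsMDS {F : Type*} [Field F] {n : ℕ} (A : Matrix (Fin n) (Fin n) F) : Prop :=
  ∀ (k : ℕ) (r c : Fin k → Fin n), Function.Injective r → Function.Injective c →
    (A.submatrix r c).det ≠ 0

/-- A square matrix `A` of order `n` is NMDS if the block matrix `[I | A]` satisfies: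
(i) every `n-1` of its columns are linearly independent, (ii) some `n` of its columns
are linearly dependent, and (iii) every `n+1` of its columns span a space of dimension `n`. -/
def IsNMDSMatrix {F : Type*} [Field F] {n : ℕ} (A : Matrix (Fin n) (Fin n) F) : Prop :=
  (∀ S : Finset (Fin n ⊕ Fin n), S.card = n - 1 →
      LinearIndependent F
        (fun j : S => (Matrix.fromCols (1 : Matrix (Fin n) (Fin n) F) A).transpose j.1)) ∧
  (∃ S : Finset (Fin n ⊕ Fin n), S.card = n ∧
      ¬ LinearIndependent F
        (fun j : S => (Matrix.fromCols (1 : Matrix (Fin n) (Fin n) F) A).transpose j.1)) ∧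
  (∀ S : Finset (Fin n ⊕ Fin n), S.card = n + 1 →
      Module.finrank F (Submodule.span F
        ((fun j => (Matrix.fromCols (1 : Matrix (Fin n) (Fin n) F) A).transpose j) ''
          (S : Set (Fin n ⊕ Fin n)))) = n)

open Polynomial in
lemma gvand_det_ne_zero {F : Type*} [Field F] {n : ℕ}
    (z : Fin n → F) (hz : Function.Injective z) (hs : ∑ j, z j ≠ 0) :
    (gvand z (expOmitPen n)).det ≠ 0 := by
  rcases Nat.eq_zero_or_pos n with hn | hn
  · subst hn
    rw [Matrix.det_fin_zero]
    exact one_ne_zero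
  intro hdet
  obtain ⟨a, ha, hav⟩ := (Matrix.exists_mulVec_eq_zero_iff (M := (gvand z (expOmitPen n)).transpose)).mpr
    (by rw [Matrix.det_transpose]; exact hdet)
  set e := expOmitPen n with he
  have he_le : ∀ i : Fin n, e i ≤ n := by
    intro i; simp only [he, expOmitPen]; split <;> omega
  have he_ne : ∀ i : Fin n, e i ≠ n - 1 := by
    intro i; have := i.isLt; simp only [he, expOmitPen]; split <;> omega
  have he_inj : Function.Injective e := by
    intro i j h
    have hi := i.isLt; have hj := j.isLt
    simp only [he, expOmitPen] at h
    split_ifs at h <;> exact Fin.ext (by omega)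
  set p : F[X] := ∑ i : Fin n, C (a i) * X ^ (e i) with hp
  have hcoeff : ∀ m, p.coeff m = ∑ i, if e i = m then a i else 0 := by
    intro m
    rw [hp, finset_sum_coeff]
    refine Finset.sum_congr rfl fun i _ => ?_
    simp [coeff_C_mul, coeff_X_pow, eq_comm]
  have hcoeff_e : ∀ i, p.coeff (e i) = a i := by
    intro i
    rw [hcoeff]
    rw [Finset.sum_eq_single i (fun j _ hj => if_neg (fun h => hj (he_inj h)))
      (fun h => absurd (Finset.mem_univ i) h)]
    simp
  have hcoeff_pred : p.coeff (n - 1) = 0 := by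
    rw [hcoeff]
    exact Finset.sum_eq_zero fun i _ => if_neg (he_ne i)
  have hpdeg : p.natDegree ≤ n := by
    refine natDegree_sum_le_of_forall_le _ _ fun i _ => ?_
    exact le_trans (natDegree_C_mul_le _ _) (by simp [he_le i])
  have heval : ∀ j, p.eval (z j) = 0 := by
    intro j
    have := congrFun hav j
    simp only [Matrix.mulVec, Matrix.transpose_apply, dotProduct, gvand, Matrix.of_apply,
      Pi.zero_apply] at this
    rw [hp]
    simp only [eval_finset_sum, eval_mul, eval_C, eval_pow, eval_X]
    rw [← this]
    exact Finset.sum_congr rfl fun i _ => mul_comm _ _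
  set Q : F[X] := ∏ j : Fin n, (X - C (z j)) with hQ
  have hQm : Q.Monic := monic_prod_of_monic _ _ fun j _ => monic_X_sub_C _
  have hQdeg : Q.natDegree = n := by
    rw [hQ, natDegree_prod_of_monic _ _ fun j _ => monic_X_sub_C _]
    simp
  have hQn : Q.coeff n = 1 := by
    have := hQm.coeff_natDegree
    rwa [hQdeg] at this
  have hQpred : Q.coeff (n - 1) = -∑ j, z j := by
    have := prod_X_sub_C_coeff_card_pred (Finset.univ : Finset (Fin n)) z
      (by simpa using hn)
    simpa using this
  set c := p.coeff n with hc
  set q := p - C c * Q with hq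
  have hqn : q.coeff n = 0 := by
    rw [hq, coeff_sub, coeff_C_mul, hQn, mul_one, sub_self]
  have hqdeg : q.natDegree < n := by
    have h1 : q.natDegree ≤ n := le_trans (natDegree_sub_le _ _)
      (max_le hpdeg (le_trans (natDegree_C_mul_le _ _) (le_of_eq hQdeg)))
    rcases eq_or_ne q 0 with h0 | h0
    · rw [h0, natDegree_zero]; exact hn
    refine lt_of_le_of_ne h1 fun hdeq => ?_
    apply h0
    have : q.leadingCoeff = 0 := by rw [Polynomial.leadingCoeff, hdeq]; exact hqn
    exact Polynomial.leadingCoeff_eq_zero.mp this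
  have hqeval : ∀ j, q.eval (z j) = 0 := by
    intro j
    rw [hq, eval_sub, eval_mul, eval_C, heval, hQ, eval_prod]
    rw [Finset.prod_eq_zero (Finset.mem_univ j) (by simp)]
    ring
  have hq0 : q = 0 := by
    refine eq_zero_of_natDegree_lt_card_of_eval_eq_zero q hz hqeval ?_
    simpa [Fintype.card_fin] using hqdeg
  have hpeq : p = C c * Q := by
    have := sub_eq_zero.mp hq0
    exact this
  have hc0 : c = 0 := by
    have h1 : p.coeff (n - 1) = c * Q.coeff (n - 1) := by rw [hpeq, coeff_C_mul]
    rw [hcoeff_pred, hQpred] at h1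
    rcases mul_eq_zero.mp h1.symm with h | h
    · exact h
    · exact absurd (neg_eq_zero.mp h) hs
  have hp0 : p = 0 := by rw [hpeq, hc0, map_zero, zero_mul]
  apply ha
  funext i
  have := hcoeff_e i
  rw [hp0, coeff_zero] at this
  exact this.symm

lemma half_sum_ne_zero {F : Type*} [Field F] {n : ℕ} (x : Fin (n + n) → F)
    (hsum : ∀ R : Finset (Fin (n + n)), R.card = n → ∑ i ∈ R, x i ≠ 0)
    {ρ : Fin n → Fin (n + n)} (hρ : Function.Injective ρ) :
    ∑ j, x (ρ j) ≠ 0 := by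
  have h1 : ∑ j, x (ρ j) = ∑ i ∈ Finset.univ.image ρ, x i :=
    (Finset.sum_image (fun a _ b _ h => hρ h)).symm
  rw [h1]
  exact hsum _ (by rw [Finset.card_image_of_injective _ hρ, Finset.card_univ, Fintype.card_fin])

lemma natAdd_inj {n m : ℕ} : Function.Injective (Fin.natAdd n : Fin m → Fin (n + m)) := by
  intro a b h
  have := congrArg Fin.val h
  simp only [Fin.natAdd_mk, Fin.natAdd] at this
  exact Fin.ext (by omega)

lemma aux_MDS {F : Type*} [Field F] {n : ℕ}
    (x : Fin (n + n) → F) (hx : Function.Injective x)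
    (hsum : ∀ R : Finset (Fin (n + n)), R.card = n → ∑ i ∈ R, x i ≠ 0) :
    IsMDS ((gvand (fun i => x (Fin.castAdd n i)) (expOmitPen n))⁻¹ *
      gvand (fun i => x (Fin.natAdd n i)) (expOmitPen n)) := by
  classical
  set e := expOmitPen n
  set V₁ := gvand (fun i => x (Fin.castAdd n i)) e with hV₁
  set V₂ := gvand (fun i => x (Fin.natAdd n i)) e with hV₂
  have hcastinj : Function.Injective (fun i : Fin n => x (Fin.castAdd n i)) := by
    intro i j h
    exact Fin.ext (by simpa [Fin.castAdd, Fin.castLE] using congrArg Fin.val (hx h))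
  have hdet1 : V₁.det ≠ 0 :=
    gvand_det_ne_zero _ hcastinj
      (half_sum_ne_zero x hsum (Fin.castAdd_injective n n))
  have hu1 : IsUnit V₁.det := isUnit_iff_ne_zero.mpr hdet1
  intro k r c hr hc
  intro hdet0
  obtain ⟨u, hu, huv⟩ := (Matrix.exists_mulVec_eq_zero_iff).mpr hdet0
  -- extended vector
  set utld : Fin n → F := fun j => ∑ l, if c l = j then u l else 0 with hutld
  have hdot : ∀ g : Fin n → F, ∑ j, g j * utld j = ∑ l, g (c l) * u l := by
    intro g
    rw [hutld]
    simp only [Finset.mul_sum, mul_ite, mul_zero]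
    rw [Finset.sum_comm]
    refine Finset.sum_congr rfl fun l _ => ?_
    rw [Finset.sum_ite_eq Finset.univ (c l) (fun j => g j * u l)]
    simp
  set M := V₁⁻¹ * V₂ with hM
  set v := M.mulVec utld with hv
  have hvr : ∀ i : Fin k, v (r i) = 0 := by
    intro i
    have h0 := congrFun huv i
    simp only [Matrix.mulVec, dotProduct, Matrix.submatrix_apply, Pi.zero_apply] at h0
    rw [hv]
    simp only [Matrix.mulVec, dotProduct]
    rw [hdot fun j => M (r i) j]
    exact h0
  have hVv : V₁.mulVec v = V₂.mulVec utld := by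
    rw [hv, hM, Matrix.mulVec_mulVec, ← Matrix.mul_assoc, Matrix.mul_nonsing_inv _ hu1,
      Matrix.one_mul]
  -- the mixed point selection
  set ρ : Fin n → Fin (n + n) := fun j =>
    if h : ∃ l, r l = j then Fin.natAdd n (c h.choose) else Fin.castAdd n j with hρ
  have hρspec : ∀ (l : Fin k), ρ (r l) = Fin.natAdd n (c l) := by
    intro l
    have h : ∃ l', r l' = r l := ⟨l, rfl⟩
    have : h.choose = l := hr h.choose_spec
    simp [hρ, dif_pos h, this]
  have hρspec2 : ∀ j : Fin n, (¬ ∃ l, r l = j) → ρ j = Fin.castAdd n j := by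
    intro j hj; simp [hρ, dif_neg hj]
  have hρinj : Function.Injective ρ := by
    intro j j' h
    rw [hρ] at h
    dsimp only at h
    split_ifs at h with h1 h2 h2
    · have := hc (natAdd_inj h)
      rw [← h1.choose_spec, ← h2.choose_spec, this]
    · exact absurd (congrArg Fin.val h) (by simp [Fin.natAdd, Fin.castAdd, Fin.castLE]; omega)
    · exact absurd (congrArg Fin.val h) (by simp [Fin.natAdd, Fin.castAdd, Fin.castLE]; omega)
    · exact Fin.castAdd_injective n n h
  set z : Fin n → F := fun j => x (ρ j) with hz
  have hzinj : Function.Injective z := fun a b h => hρinj (hx h)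
  have hzsum : ∑ j, z j ≠ 0 := half_sum_ne_zero x hsum hρinj
  set b : Fin n → F := fun j => if h : ∃ l, r l = j then u h.choose else -(v j) with hb
  have hbne : b ≠ 0 := by
    obtain ⟨l₀, hl₀⟩ := Function.ne_iff.mp hu
    intro hb0
    apply hl₀
    have h : ∃ l, r l = r l₀ := ⟨l₀, rfl⟩
    have hch : h.choose = l₀ := hr h.choose_spec
    have := congrFun hb0 (r l₀)
    simp only [hb, dif_pos h, hch, Pi.zero_apply] at this
    simpa using this
  have hker : (gvand z e).mulVec b = 0 := by
    funext i
    simp only [Matrix.mulVec, dotProduct, gvand, Matrix.of_apply, Pi.zero_apply]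
    have hsplit := Finset.sum_add_sum_compl (Finset.univ.image r)
      (fun j => z j ^ e i * b j)
    rw [← hsplit]
    have hA : ∑ j ∈ Finset.univ.image r, z j ^ e i * b j
        = ∑ l, x (Fin.natAdd n (c l)) ^ e i * u l := by
      rw [Finset.sum_image (fun a _ b' _ h => hr h)]
      refine Finset.sum_congr rfl fun l _ => ?_
      have h : ∃ l', r l' = r l := ⟨l, rfl⟩
      have hch : h.choose = l := hr h.choose_spec
      simp [hz, hb, hρspec l, dif_pos h, hch]
    have hB : ∑ j ∈ (Finset.univ.image r)ᶜ, z j ^ e i * b j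
        = -∑ j, x (Fin.castAdd n j) ^ e i * v j := by
      have step1 : ∑ j ∈ (Finset.univ.image r)ᶜ, z j ^ e i * b j
          = ∑ j ∈ (Finset.univ.image r)ᶜ, -(x (Fin.castAdd n j) ^ e i * v j) := by
        refine Finset.sum_congr rfl fun j hj => ?_
        have hnj : ¬ ∃ l, r l = j := by
          intro ⟨l, hl⟩
          exact (Finset.mem_compl.mp hj) (Finset.mem_image.mpr ⟨l, Finset.mem_univ l, hl⟩)
        simp [hz, hb, hρspec2 j hnj, dif_neg hnj, mul_neg]
      rw [step1, Finset.sum_neg_distrib]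
      congr 1
      symm
      rw [← Finset.sum_add_sum_compl (Finset.univ.image r)
        (fun j => x (Fin.castAdd n j) ^ e i * v j)]
      have : ∑ j ∈ Finset.univ.image r, x (Fin.castAdd n j) ^ e i * v j = 0 := by
        refine Finset.sum_eq_zero fun j hj => ?_
        obtain ⟨l, _, hl⟩ := Finset.mem_image.mp hj
        rw [← hl, hvr l, mul_zero]
      rw [this, zero_add]
    rw [hA, hB]
    have h2 : ∑ l, x (Fin.natAdd n (c l)) ^ e i * u l = (V₂.mulVec utld) i := by
      simp only [Matrix.mulVec, dotProduct]
      rw [hdot fun j => V₂ i j]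
      rfl
    have h1 : ∑ j, x (Fin.castAdd n j) ^ e i * v j = (V₁.mulVec v) i := rfl
    rw [h2, h1, hVv]
    ring
  have : (gvand z e).det = 0 :=
    Matrix.exists_mulVec_eq_zero_iff.mp ⟨b, hbne, hker⟩
  exact gvand_det_ne_zero z hzinj hzsum this

/-- MDS matrices from generalized Vandermonde matrices `V_⊥(·;{n-1})`. -/
theorem genVandermonde_omitPen_MDS {F : Type*} [Field F] [Fintype F] {n : ℕ}
    (x : Fin (n + n) → F) (hx : Function.Injective x)
    (hsum : ∀ R : Finset (Fin (n + n)), R.card = n → ∑ i ∈ R, x i ≠ 0)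
    (V₁ V₂ : Matrix (Fin n) (Fin n) F)
    (hV₁ : V₁ = gvand (fun i => x (Fin.castAdd n i)) (expOmitPen n))
    (hV₂ : V₂ = gvand (fun i => x (Fin.natAdd n i)) (expOmitPen n)) :
    IsUnit V₁.det ∧ IsUnit V₂.det ∧ IsMDS (V₁⁻¹ * V₂) ∧ IsMDS (V₂⁻¹ * V₁) := by
  have hcastinj : Function.Injective (fun j : Fin n => Fin.castAdd n j) :=
    Fin.castAdd_injective n n
  have hnatinj : Function.Injective (fun j : Fin n => Fin.natAdd n j) :=
    fun a b h => natAdd_inj h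
  have hu1 : IsUnit V₁.det := by
    rw [hV₁]
    exact isUnit_iff_ne_zero.mpr (gvand_det_ne_zero _
      (fun a b h => hcastinj (hx h)) (half_sum_ne_zero x hsum hcastinj))
  have hu2 : IsUnit V₂.det := by
    rw [hV₂]
    exact isUnit_iff_ne_zero.mpr (gvand_det_ne_zero _
      (fun a b h => hnatinj (hx h)) (half_sum_ne_zero x hsum hnatinj))
  refine ⟨hu1, hu2, ?_, ?_⟩
  · rw [hV₁, hV₂]
    exact aux_MDS x hx hsum
  · -- swap the two halves
    set σ : Fin (n + n) → Fin (n + n) := fun i =>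
      if h : (i : ℕ) < n then ⟨(i : ℕ) + n, by omega⟩
      else ⟨(i : ℕ) - n, by have := i.isLt; omega⟩ with hσ
    have hσinj : Function.Injective σ := by
      intro a b h
      have ha := a.isLt; have hb := b.isLt
      rw [hσ] at h
      dsimp only at h
      split_ifs at h <;>
        (have := congrArg Fin.val h; simp only at this; exact Fin.ext (by omega))
    have hσcast : ∀ j : Fin n, σ (Fin.castAdd n j) = Fin.natAdd n j := by
      intro j
      have hj : ((Fin.castAdd n j : Fin (n + n)) : ℕ) = (j : ℕ) := rfl
      have hj2 : ((Fin.natAdd n j : Fin (n + n)) : ℕ) = n + (j : ℕ) := rfl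
      rw [hσ]
      dsimp only
      rw [dif_pos (by rw [hj]; exact j.isLt)]
      exact Fin.ext (by show ((Fin.castAdd n j : Fin (n+n)) : ℕ) + n = _; rw [hj2, hj]; omega)
    have hσnat : ∀ j : Fin n, σ (Fin.natAdd n j) = Fin.castAdd n j := by
      intro j
      have hj : ((Fin.natAdd n j : Fin (n + n)) : ℕ) = n + (j : ℕ) := rfl
      have hj2 : ((Fin.castAdd n j : Fin (n + n)) : ℕ) = (j : ℕ) := rfl
      rw [hσ]
      dsimp only
      rw [dif_neg (by rw [hj]; omega)]
      exact Fin.ext (by show ((Fin.natAdd n j : Fin (n+n)) : ℕ) - n = _; rw [hj2, hj]; omega)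
    have hx' : Function.Injective (fun i => x (σ i)) := fun a b h => hσinj (hx h)
    have hsum' : ∀ R : Finset (Fin (n + n)), R.card = n → ∑ i ∈ R, x (σ i) ≠ 0 := by
      intro R hR
      rw [← Finset.sum_image (f := x) (g := σ) (fun a _ b _ h => hσinj h)]
      exact hsum _ (by rw [Finset.card_image_of_injective _ hσinj, hR])
    have := aux_MDS (fun i => x (σ i)) hx' hsum'
    have e1 : (fun i : Fin n => x (σ (Fin.castAdd n i))) = fun i => x (Fin.natAdd n i) := by
      funext i; rw [hσcast]
    have e2 : (fun i : Fin n => x (σ (Fin.natAdd n i))) = fun i => x (Fin.castAdd n i) := by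
      funext i; rw [hσnat]
    rw [e1, e2] at this
    rw [hV₁, hV₂]
    exact this
end

section
/- Let F_q be a finite field and let x_1, …, x_{2n} ∈ F_q be 2n pairwise distinct elements such that Σ_{i=1}^n x_i ≠ 0, Σ_{i=1}^n x_{n+i} ≠ 0, and Σ_{i∈R} x_i = 0 for some subset R ⊆ {1, …, 2n} with |R| = n. Let V_1 = V_⊥((x_1, …, x_n); {n−1}) and V_2 = V_⊥((x_{n+1}, …, x_{2n}); {n−1}). Then V_1 and V_2 are invertible and the matrices V_1^{-1}V_2 and V_2^{-1}V_1 are NMDS matrices. -/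
open Matrix Polynomial Finset

lemma gvand_omitPen_det {F : Type*} [Field F] {m : ℕ} (y : Fin (m + 1) → F) :
    (gvand y (expOmitPen (m + 1))).det = (∑ i, y i) * (Matrix.vandermonde y).det := by
  classical
  set P : F[X] := ∏ i : Fin (m+1), (X - C (y i)) with hP
  have hmonic : P.Monic := monic_prod_of_monic _ _ fun i _ => monic_X_sub_C _
  have hdeg : P.natDegree = m + 1 := by
    rw [hP, natDegree_prod_of_monic _ _ fun i _ => monic_X_sub_C _]
    simp [natDegree_X_sub_C]
  have hcoeff : P.coeff m = -∑ i, y i := by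
    have h1 := prod_X_sub_C_nextCoeff (s := (univ : Finset (Fin (m+1)))) y
    rw [nextCoeff, if_neg (by rw [hdeg]; omega), hdeg] at h1
    simpa using h1
  have heval : ∀ j, P.eval (y j) = 0 := by
    intro j
    rw [hP, eval_prod]
    exact Finset.prod_eq_zero (mem_univ j) (by simp)
  have hkey : ∀ j : Fin (m+1), ∑ k ∈ Finset.range (m+1), (-(P.coeff k)) * (y j) ^ k = y j ^ (m+1) := by
    intro j
    have h2 := eval_eq_sum_range (p := P) (y j)
    have hcn : P.coeff (m+1) = 1 := by rw [← hdeg]; exact hmonic.coeff_natDegree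
    rw [hdeg, Finset.sum_range_succ, hcn, one_mul, heval j] at h2
    simp only [neg_mul]
    rw [Finset.sum_neg_distrib]
    linear_combination h2
  set Cm : Matrix (Fin (m+1)) (Fin (m+1)) F :=
    Matrix.of (fun i k : Fin (m+1) => if (i : ℕ) = m then -(P.coeff (k : ℕ))
      else if k = i then (1:F) else 0) with hCm
  have hfact : gvand y (expOmitPen (m+1)) = Cm * (Matrix.vandermonde y)ᵀ := by
    ext i j
    rw [Matrix.mul_apply]
    by_cases hi : (i : ℕ) = m
    · have hl : gvand y (expOmitPen (m+1)) i j = y j ^ (m+1) := by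
        simp [gvand, expOmitPen, hi]
      rw [hl]
      have : ∀ k : Fin (m+1), Cm i k * (Matrix.vandermonde y)ᵀ k j = -(P.coeff (k:ℕ)) * y j ^ (k:ℕ) := by
        intro k; simp [hCm, hi]
      rw [Finset.sum_congr rfl fun k _ => this k,
        Fin.sum_univ_eq_sum_range (fun k => -(P.coeff k) * y j ^ k) (m+1)]
      exact (hkey j).symm
    · have hl : gvand y (expOmitPen (m+1)) i j = y j ^ (i:ℕ) := by
        simp [gvand, expOmitPen, hi]
      rw [hl]
      have : ∀ k : Fin (m+1), Cm i k * (Matrix.vandermonde y)ᵀ k j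
          = if k = i then y j ^ (k:ℕ) else 0 := by
        intro k; by_cases hk : k = i <;> simp [hCm, hi, hk]
      rw [Finset.sum_congr rfl fun k _ => this k, Finset.sum_ite_eq' univ i]
      simp
  have htri : Cm.BlockTriangular OrderDual.toDual := by
    intro i j hij
    simp only [OrderDual.toDual_lt_toDual, Fin.lt_iff_val_lt_val] at hij
    have hj := j.isLt
    have h1 : ¬ (i:ℕ) = m := by omega
    have h2 : j ≠ i := by
      intro h; rw [h] at hij; omega
    simp [hCm, h1, h2]
  have hdetC : Cm.det = ∑ i, y i := by
    rw [Matrix.det_of_lowerTriangular Cm htri]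
    have hi₀ : (⟨m, by omega⟩ : Fin (m+1)) ∈ (univ : Finset (Fin (m+1))) := mem_univ _
    rw [Finset.prod_eq_single_of_mem (⟨m, by omega⟩ : Fin (m+1)) hi₀]
    · simp [hCm, hcoeff]
    · intro i _ hne
      have : (i:ℕ) ≠ m := fun h => hne (Fin.ext h)
      simp [hCm, this]
  rw [hfact, Matrix.det_mul, Matrix.det_transpose, hdetC]


lemma main_NMDS {F : Type*} [Field F] {m : ℕ}
    (w : Fin (m+1) ⊕ Fin (m+1) → F) (hw : Function.Injective w)
    (V W : Matrix (Fin (m+1)) (Fin (m+1)) F)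
    (hV : V = gvand (w ∘ Sum.inl) (expOmitPen (m+1)))
    (hW : W = gvand (w ∘ Sum.inr) (expOmitPen (m+1)))
    (hdet : IsUnit V.det)
    (hzero : ∃ S : Finset (Fin (m+1) ⊕ Fin (m+1)), S.card = m+1 ∧ ∑ j ∈ S, w j = 0) :
    IsNMDSMatrix (V⁻¹ * W) := by
  classical
  set col : (Fin (m+1) ⊕ Fin (m+1)) → (Fin (m+1) → F) :=
    fun j t => w j ^ expOmitPen (m+1) t with hcol
  set f : (Fin (m+1) → F) →ₗ[F] (Fin (m+1) → F) := Matrix.mulVecLin V⁻¹ with hf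
  have hd0 : V.det ≠ 0 := hdet.ne_zero
  have hVinv : IsUnit (V⁻¹) := by
    rw [Matrix.isUnit_iff_isUnit_det, Matrix.det_nonsing_inv, Ring.inverse_eq_inv']
    exact isUnit_iff_ne_zero.mpr (inv_ne_zero hd0)
  have hker : LinearMap.ker f = ⊥ := by
    rw [LinearMap.ker_eq_bot]
    intro a b hab
    exact Matrix.mulVec_injective_iff_isUnit.mpr hVinv
      (by simpa [hf, Matrix.mulVecLin_apply] using hab)
  have key : ∀ j, (fromCols (1 : Matrix (Fin (m+1)) (Fin (m+1)) F) (V⁻¹ * W))ᵀ j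
      = f (col j) := by
    intro j
    have hfc : fromCols (1 : Matrix (Fin (m+1)) (Fin (m+1)) F) (V⁻¹ * W)
        = V⁻¹ * fromCols V W := by
      rw [Matrix.mul_fromCols, Matrix.nonsing_inv_mul V hdet]
    funext t
    show (fromCols (1 : Matrix (Fin (m+1)) (Fin (m+1)) F) (V⁻¹ * W)) t j = _
    rw [hfc, Matrix.mul_apply]
    simp only [hf, Matrix.mulVecLin_apply, Matrix.mulVec, dotProduct]
    refine Finset.sum_congr rfl fun k _ => ?_
    congr 1
    cases j with
    | inl a => simp [hV, gvand, hcol]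
    | inr a => simp [hW, gvand, hcol]
  have crit : ∀ (S : Finset (Fin (m+1) ⊕ Fin (m+1))), S.card = m+1 →
      (LinearIndependent F (fun j : S => col j.1) ↔ ∑ j ∈ S, w j ≠ 0) := by
    intro S hS
    have ε : S ≃ Fin (m+1) := S.equivFinOfCardEq hS
    set v : Fin (m+1) → F := fun k => w (ε.symm k).1 with hv
    have hvinj : Function.Injective v := by
      intro a b hab
      exact ε.symm.injective (Subtype.val_injective (hw hab))
    have hvdm : (Matrix.vandermonde v).det ≠ 0 := Matrix.det_vandermonde_ne_zero_iff.mpr hvinj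
    have hsum : ∑ k, v k = ∑ j ∈ S, w j := by
      rw [hv]
      rw [Equiv.sum_comp ε.symm (fun j : S => w j.1)]
      exact Finset.sum_coe_sort S w
    have hfam : (fun j : S => col j.1) ∘ ε.symm
        = fun k => (gvand v (expOmitPen (m+1)))ᵀ k := by
      funext k
      funext t
      simp [hcol, gvand, hv]
    rw [← linearIndependent_equiv ε.symm (f := fun j : S => col j.1), hfam,
      show (fun k => (gvand v (expOmitPen (m+1)))ᵀ k) = (gvand v (expOmitPen (m+1))).col from rfl,
      Matrix.linearIndependent_cols_iff_isUnit, Matrix.isUnit_iff_isUnit_det,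
      gvand_omitPen_det, isUnit_iff_ne_zero, hsum, mul_ne_zero_iff]
    simp [hvdm]
  refine ⟨?_, ?_, ?_⟩
  · -- (i)
    intro S hS
    have heq : (fun j : S => (fromCols (1 : Matrix (Fin (m+1)) (Fin (m+1)) F) (V⁻¹ * W))ᵀ j.1)
        = f ∘ (fun j : S => col j.1) := funext fun j => key j.1
    rw [heq, LinearMap.linearIndependent_iff f hker]
    have hScard : S.card = m := by simpa using hS
    have ε : Fin m ≃ S := (S.equivFinOfCardEq hScard).symm
    rw [← linearIndependent_equiv ε]
    set v : Fin m → F := fun k => w (ε k).1 with hv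
    have hvinj : Function.Injective v := by
      intro a b hab
      exact ε.injective (Subtype.val_injective (hw hab))
    apply LinearIndependent.of_comp (LinearMap.funLeft F F (Fin.castSucc : Fin m → Fin (m+1)))
    have hfam : (LinearMap.funLeft F F (Fin.castSucc : Fin m → Fin (m+1)))
        ∘ ((fun j : S => col j.1) ∘ ε) = fun k => Matrix.vandermonde v k := by
      funext k
      funext i
      have hne : (i : ℕ) ≠ m := Nat.ne_of_lt i.isLt
      simp only [hcol, LinearMap.funLeft_apply, Function.comp_apply, expOmitPen, hv,
        Matrix.vandermonde_apply, Fin.coe_castSucc]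
      rw [if_neg (by simpa using hne)]
    rw [hfam]
    exact Matrix.linearIndependent_rows_iff_isUnit.mpr ((Matrix.isUnit_iff_isUnit_det _).mpr
      (isUnit_iff_ne_zero.mpr (Matrix.det_vandermonde_ne_zero_iff.mpr hvinj)))
  · -- (ii)
    obtain ⟨S, hS, hsum0⟩ := hzero
    refine ⟨S, hS, ?_⟩
    intro hind
    have heq : (fun j : S => (fromCols (1 : Matrix (Fin (m+1)) (Fin (m+1)) F) (V⁻¹ * W))ᵀ j.1)
        = f ∘ (fun j : S => col j.1) := funext fun j => key j.1
    rw [heq] at hind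
    exact ((crit S hS).mp (hind.of_comp f)) hsum0
  · -- (iii)
    intro S hS
    have heq : (fun j => (fromCols (1 : Matrix (Fin (m+1)) (Fin (m+1)) F) (V⁻¹ * W))ᵀ j)
        = fun j => f (col j) := funext key
    rw [heq]
    have h2 : ∃ j₀ ∈ S, ∑ i ∈ S.erase j₀, w i ≠ 0 := by
      by_contra hc
      push_neg at hc
      have hconst : ∀ j ∈ S, w j = ∑ i ∈ S, w i := by
        intro j hj
        have h3 := Finset.add_sum_erase S w hj
        rw [hc j hj, add_zero] at h3
        exact h3
      obtain ⟨a, ha, b, hb, hab⟩ := Finset.one_lt_card.mp (by omega : 1 < S.card)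
      exact hab (hw ((hconst a ha).trans (hconst b hb).symm))
    obtain ⟨j₀, hj₀, hne0⟩ := h2
    set S' := S.erase j₀ with hS'def
    have hS' : S'.card = m+1 := by
      rw [hS'def, Finset.card_erase_of_mem hj₀, hS]
      omega
    have hind : LinearIndependent F (fun j : S' => col j.1) := (crit S' hS').mpr hne0
    have hind2 : LinearIndependent F (fun j : S' => f (col j.1)) := by
      have := hind.map' f hker
      exact this
    have hrange : Set.range (fun j : S' => f (col j.1))
        = (fun j => f (col j)) '' (S' : Set (Fin (m+1) ⊕ Fin (m+1))) := by
      rw [show (fun j : S' => f (col j.1)) = (fun j => f (col j)) ∘ (Subtype.val : S' → _)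
        from rfl, Set.range_comp, Subtype.range_coe]
    have h3 : Module.finrank F (Submodule.span F
        ((fun j => f (col j)) '' (S' : Set (Fin (m+1) ⊕ Fin (m+1))))) = m+1 := by
      rw [← hrange, finrank_span_eq_card hind2]
      simp [hS']
    refine le_antisymm ?_ ?_
    · have h4 := Submodule.finrank_le (Submodule.span F
        ((fun j => f (col j)) '' (S : Set (Fin (m+1) ⊕ Fin (m+1)))))
      simpa [Module.finrank_fintype_fun_eq_card] using h4
    · calc m + 1 = Module.finrank F (Submodule.span F
            ((fun j => f (col j)) '' (S' : Set (Fin (m+1) ⊕ Fin (m+1))))) := h3.symm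
        _ ≤ _ := Submodule.finrank_mono (Submodule.span_mono
            (Set.image_mono (Finset.coe_subset.mpr (Finset.erase_subset _ _))))

/-- NMDS matrices from generalized Vandermonde matrices `V_⊥(·;{n-1})`. -/
theorem genVandermonde_omitPen_NMDS {F : Type*} [Field F] [Fintype F] {n : ℕ}
    (x : Fin (n + n) → F) (hx : Function.Injective x)
    (hsum₁ : ∑ i : Fin n, x (Fin.castAdd n i) ≠ 0)
    (hsum₂ : ∑ i : Fin n, x (Fin.natAdd n i) ≠ 0)
    (hzero : ∃ R : Finset (Fin (n + n)), R.card = n ∧ ∑ i ∈ R, x i = 0)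
    (V₁ V₂ : Matrix (Fin n) (Fin n) F)
    (hV₁ : V₁ = gvand (fun i => x (Fin.castAdd n i)) (expOmitPen n))
    (hV₂ : V₂ = gvand (fun i => x (Fin.natAdd n i)) (expOmitPen n)) :
    IsUnit V₁.det ∧ IsUnit V₂.det ∧ IsNMDSMatrix (V₁⁻¹ * V₂) ∧ IsNMDSMatrix (V₂⁻¹ * V₁) := by
  classical
  rcases Nat.eq_zero_or_pos n with hn | hn
  · subst hn; simp at hsum₁
  obtain ⟨m, rfl⟩ : ∃ m, n = m + 1 := ⟨n - 1, by omega⟩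
  set w : Fin (m+1) ⊕ Fin (m+1) → F := fun j => x (finSumFinEquiv j) with hwdef
  have hwinj : Function.Injective w := hx.comp finSumFinEquiv.injective
  have hwl : (w ∘ Sum.inl) = fun i => x (Fin.castAdd (m+1) i) := by
    funext i; simp [hwdef]
  have hwr : (w ∘ Sum.inr) = fun i => x (Fin.natAdd (m+1) i) := by
    funext i; simp [hwdef]
  have hcinj : Function.Injective (fun i => x (Fin.castAdd (m+1) i)) := by
    intro a b h
    exact Fin.ext (by simpa using congrArg Fin.val (hx h))
  have hninj : Function.Injective (fun i => x (Fin.natAdd (m+1) i)) := by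
    intro a b h
    have := congrArg Fin.val (hx h)
    simp at this
    exact Fin.ext (by omega)
  have hdet₁ : IsUnit V₁.det := by
    rw [hV₁, gvand_omitPen_det, isUnit_iff_ne_zero]
    exact mul_ne_zero hsum₁ (Matrix.det_vandermonde_ne_zero_iff.mpr hcinj)
  have hdet₂ : IsUnit V₂.det := by
    rw [hV₂, gvand_omitPen_det, isUnit_iff_ne_zero]
    exact mul_ne_zero hsum₂ (Matrix.det_vandermonde_ne_zero_iff.mpr hninj)
  obtain ⟨R, hR, hRsum⟩ := hzero
  set S₀ : Finset (Fin (m+1) ⊕ Fin (m+1)) := R.map finSumFinEquiv.symm.toEmbedding with hS₀def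
  have hS₀card : S₀.card = m+1 := by rw [hS₀def, Finset.card_map, hR]
  have hS₀sum : ∑ j ∈ S₀, w j = 0 := by
    rw [hS₀def, Finset.sum_map]
    simpa [hwdef] using hRsum
  refine ⟨hdet₁, hdet₂, ?_, ?_⟩
  · exact main_NMDS w hwinj V₁ V₂ (by rw [hV₁, hwl]) (by rw [hV₂, hwr]) hdet₁
      ⟨S₀, hS₀card, hS₀sum⟩
  · set w' : Fin (m+1) ⊕ Fin (m+1) → F :=
      fun j => w (Equiv.sumComm (Fin (m+1)) (Fin (m+1)) j) with hw'def
    have hw'inj : Function.Injective w' := hwinj.comp (Equiv.sumComm _ _).injective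
    have hw'l : (w' ∘ Sum.inl) = fun i => x (Fin.natAdd (m+1) i) := by
      funext i; simp [hw'def, hwdef]
    have hw'r : (w' ∘ Sum.inr) = fun i => x (Fin.castAdd (m+1) i) := by
      funext i; simp [hw'def, hwdef]
    set S₁ : Finset (Fin (m+1) ⊕ Fin (m+1)) :=
      S₀.map (Equiv.sumComm (Fin (m+1)) (Fin (m+1))).symm.toEmbedding with hS₁def
    have hS₁card : S₁.card = m+1 := by rw [hS₁def, Finset.card_map, hS₀card]
    have hS₁sum : ∑ j ∈ S₁, w' j = 0 := by
      rw [hS₁def, Finset.sum_map]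
      simpa [hw'def] using hS₀sum
    exact main_NMDS w' hw'inj V₂ V₁ (by rw [hV₂, hw'l]) (by rw [hV₁, hw'r]) hdet₂
      ⟨S₁, hS₁card, hS₁sum⟩
end

section
/- Let F be a finite field of characteristic 2 (F = F_{2^r}), let n be even, and let x_1, …, x_n ∈ F be pairwise distinct with Σ_{i=1}^n x_i ≠ 0. Let l ∈ F be nonzero and set y_i = l + x_i for 1 ≤ i ≤ n. Let V_1 = V_⊥((x_1, …, x_n); {n−1}) and V_2 = V_⊥((y_1, …, y_n); {n−1}). Then V_1 and V_2 are invertible, V_2 V_1^{-1} is a lower triangular matrix, and V_1^{-1}V_2 is involutory, i.e., (V_1^{-1}V_2)^2 = I_n; in particular V_1^{-1}V_2 = V_2^{-1}V_1. -/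
open Matrix Polynomial Finset

lemma expOmitPen_le {n : ℕ} (i : Fin n) : expOmitPen n i ≤ n := by
  have := i.isLt; unfold expOmitPen; split <;> omega

lemma expOmitPen_strictMono {n : ℕ} : StrictMono (expOmitPen n) := by
  intro i j h
  have hi := i.isLt; have hj := j.isLt
  have hij : (i : ℕ) < j := h
  unfold expOmitPen; split <;> split <;> omega

lemma expOmitPen_inj {n : ℕ} : Function.Injective (expOmitPen n) :=
  expOmitPen_strictMono.injective

lemma expOmitPen_ne_pred {n : ℕ} (i : Fin n) : expOmitPen n i ≠ n - 1 := by
  have := i.isLt; unfold expOmitPen; split <;> omega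

/-- the determinant lemma -/
lemma gvand_det_isUnit {F : Type*} [Field F] {n : ℕ} (z : Fin n → F)
    (hz : Function.Injective z) (hs : ∑ i, z i ≠ 0) :
    IsUnit (gvand z (expOmitPen n)).det := by
  have hn0 : n ≠ 0 := by rintro rfl; simp at hs
  classical
  rw [isUnit_iff_ne_zero]
  intro hdet
  have hdet' : (gvand z (expOmitPen n)).transpose.det = 0 := by rwa [Matrix.det_transpose]
  obtain ⟨v, hv0, hv⟩ := (Matrix.exists_mulVec_eq_zero_iff).2 hdet'
  set e := expOmitPen n with he
  set p : Polynomial F := ∑ i : Fin n, Polynomial.C (v i) * Polynomial.X ^ (e i) with hp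
  have heval : ∀ j, p.eval (z j) = 0 := by
    intro j
    have h1 := congrFun hv j
    simp only [Matrix.mulVec, dotProduct, Matrix.transpose_apply, gvand,
      Matrix.of_apply, Pi.zero_apply] at h1
    rw [hp]
    simp only [eval_finset_sum, eval_mul, eval_C, eval_pow, eval_X]
    rw [← h1]
    exact Finset.sum_congr rfl fun i _ => mul_comm _ _
  have hcoeff : ∀ i, p.coeff (e i) = v i := by
    intro i
    rw [hp, Polynomial.finset_sum_coeff]
    rw [Finset.sum_eq_single i]
    · simp
    · intro b _ hb
      simp only [Polynomial.coeff_C_mul, Polynomial.coeff_X_pow]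
      rw [if_neg (fun hbe => hb (expOmitPen_inj hbe.symm)), mul_zero]
    · simp
  have hpne : p ≠ 0 := by
    obtain ⟨i, hi⟩ := Function.ne_iff.1 hv0
    intro h
    exact hi (by rw [← hcoeff i, h]; simp)
  have hdeg : p.natDegree ≤ n := by
    apply Polynomial.natDegree_sum_le_of_forall_le
    intro i _
    exact (Polynomial.natDegree_C_mul_X_pow_le _ _).trans (expOmitPen_le i)
  have hroots : ∀ j, z j ∈ p.roots := by
    intro j
    rw [Polynomial.mem_roots hpne]
    exact heval j
  -- image of z is in roots.toFinset
  have hsub : Finset.image z Finset.univ ⊆ p.roots.toFinset := by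
    intro a ha
    obtain ⟨j, _, rfl⟩ := Finset.mem_image.1 ha
    exact Multiset.mem_toFinset.2 (hroots j)
  have hcard1 : (Finset.image z Finset.univ).card = n := by
    rw [Finset.card_image_of_injective _ hz, Finset.card_univ, Fintype.card_fin]
  have hcard2 : Multiset.card p.roots ≤ n := (Polynomial.card_roots' p).trans hdeg
  have hcard3 : n ≤ p.roots.toFinset.card := hcard1 ▸ Finset.card_le_card hsub
  have hcard4 : p.roots.toFinset.card ≤ Multiset.card p.roots := Multiset.toFinset_card_le _
  have hcardroots : Multiset.card p.roots = n := le_antisymm hcard2 (hcard3.trans hcard4)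
  have hnodup : p.roots.Nodup := by
    rw [← Multiset.toFinset_card_eq_card_iff_nodup]
    omega
  have hfin : p.roots.toFinset = Finset.image z Finset.univ :=
    (Finset.eq_of_subset_of_card_le hsub (by omega)).symm
  have hrootsum : p.roots.sum = ∑ j, z j := by
    have : p.roots = (Finset.image z Finset.univ).val := by
      rw [← hfin]
      exact (Multiset.toFinset_val p.roots ▸ (Multiset.dedup_eq_self.2 hnodup)).symm
    rw [this]
    have : (Finset.image z Finset.univ).val.sum = ∑ t ∈ Finset.image z Finset.univ, t := by
      rw [Finset.sum]; rw [Multiset.map_id']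
    rw [this, Finset.sum_image (fun a _ b _ h => hz h)]
  obtain ⟨r, hr⟩ := Polynomial.prod_multiset_X_sub_C_dvd p
  set q := (p.roots.map fun a => Polynomial.X - Polynomial.C a).prod with hq
  have hqmonic : q.Monic :=
    Polynomial.monic_multiset_prod_of_monic _ _ (fun a _ => Polynomial.monic_X_sub_C a)
  have hqdeg : q.natDegree = n := by
    rw [hq, Polynomial.natDegree_multiset_prod_X_sub_C_eq_card, hcardroots]
  have hrne : r ≠ 0 := by rintro rfl; rw [mul_zero] at hr; exact hpne hr
  have hdegp' : n ≤ p.natDegree := hcardroots ▸ Polynomial.card_roots' p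
  have hpdeg : p.natDegree = n := le_antisymm hdeg hdegp'
  have hrdeg : r.natDegree = 0 := by
    have h2 := Polynomial.natDegree_mul (hqmonic.ne_zero) hrne
    rw [← hr] at h2; omega
  obtain ⟨c, rfl⟩ := Polynomial.natDegree_eq_zero.1 hrdeg
  have hcne : c ≠ 0 := fun h => hrne (by rw [h, map_zero])
  have hc0 : p.coeff (n - 1) = 0 := by
    rw [hp, Polynomial.finset_sum_coeff]
    apply Finset.sum_eq_zero
    intro i _
    rw [Polynomial.coeff_C_mul, Polynomial.coeff_X_pow, if_neg (fun h => expOmitPen_ne_pred i h.symm), mul_zero]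
  have hqc : q.coeff (n - 1) = - p.roots.sum := by
    have h3 := Polynomial.multiset_prod_X_sub_C_coeff_card_pred p.roots (by rw [hcardroots]; omega)
    rwa [hcardroots] at h3
  rw [hr, Polynomial.coeff_mul_C, hqc, hrootsum] at hc0
  rcases mul_eq_zero.1 hc0 with h | h
  · exact hs (neg_eq_zero.1 h)
  · exact hcne h

noncomputable def Lmat (F : Type*) [Field F] (l : F) (n : ℕ) : Matrix (Fin n) (Fin n) F :=
  Matrix.of fun i j =>
    ((expOmitPen n i).choose (expOmitPen n j) : F) * l ^ (expOmitPen n i - expOmitPen n j)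

lemma gvand_key {F : Type*} [Field F] [CharP F 2] {n : ℕ} (hn : Even n) (l z : F) (i : Fin n) :
    ∑ k : Fin n, Lmat F l n i k * z ^ (expOmitPen n k) = (l + z) ^ (expOmitPen n i) := by
  classical
  set e := expOmitPen n with he
  set m := e i with hm
  set f : ℕ → F := fun t => ((m.choose t : F) * l ^ (m - t)) * z ^ t with hf
  have hn1 : 1 ≤ n := i.pos
  have hnF : (n : F) = 0 := (CharP.cast_eq_zero_iff F 2 n).2 hn.two_dvd
  have hmn : m ≤ n := expOmitPen_le i
  set S := Finset.image e Finset.univ with hS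
  set T := Finset.range (m + 1) with hT
  have hL : ∑ k : Fin n, Lmat F l n i k * z ^ e k = ∑ t ∈ S, f t := by
    rw [hS, Finset.sum_image (fun a _ b _ h => expOmitPen_inj h)]
    rfl
  have h1 : ∀ t ∈ S ∪ T, t ∉ S → f t = 0 := by
    intro u hmem hns
    have htT : u ∈ T := by rcases Finset.mem_union.1 hmem with h | h; exact absurd h hns; exact h
    have htm : u ≤ m := by have := Finset.mem_range.1 htT; omega
    have ht1 : u = n - 1 := by
      by_contra hne
      apply hns
      rw [hS]
      have htn : u ≠ n := by
        rintro rfl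
        apply hns
        refine Finset.mem_image.2 ⟨⟨u - 1, by omega⟩, Finset.mem_univ _, ?_⟩
        simp [he, expOmitPen, Nat.sub_lt hn1]
      have htlt : u < n := by omega
      refine Finset.mem_image.2 ⟨⟨u, htlt⟩, Finset.mem_univ _, ?_⟩
      simp [he, expOmitPen, hne]
    have hmn' : m = n := by
      have hme : m ≠ n - 1 := expOmitPen_ne_pred i
      omega
    rw [hf]
    have hch : (m.choose u : F) = 0 := by
      have h1 : m.choose u = n := by
        rw [hmn', ht1]
        have := Nat.choose_symm (show 1 ≤ n from hn1)
        simpa using this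
      rw [h1, hnF]
    simp only
    rw [hch, zero_mul, zero_mul]
  have h2 : ∀ t ∈ S ∪ T, t ∉ T → f t = 0 := by
    intro t _ hnt
    have : m < t := by
      rcases Nat.lt_or_ge m t with h | h
      · exact h
      · exact absurd (Finset.mem_range.2 (by omega)) hnt
    rw [hf]
    simp only
    rw [Nat.choose_eq_zero_of_lt this, Nat.cast_zero, zero_mul, zero_mul]
  have hST : ∑ t ∈ S, f t = ∑ t ∈ T, f t := by
    rw [Finset.sum_subset Finset.subset_union_left h1,
      Finset.sum_subset Finset.subset_union_right h2]
  rw [hL, hST, hT, add_comm l z, add_pow]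
  refine Finset.sum_congr rfl fun t _ => ?_
  rw [hf]; ring


/-- over `F_{2^r}` with `n` even, if `y i = l + x i` then `V₂ V₁⁻¹` is lower
triangular and `V₁⁻¹ V₂` is involutory, where `Vᵢ` are generalized Vandermonde matrices
`V_⊥(·;{n-1})`. -/
theorem genVandermonde_omitPen_involutory {F : Type*} [Field F] [Fintype F] [CharP F 2]
    {n : ℕ} (hn : Even n)
    (x : Fin n → F) (hx : Function.Injective x) (hsum : ∑ i : Fin n, x i ≠ 0)
    (l : F) (hl : l ≠ 0)
    (V₁ V₂ : Matrix (Fin n) (Fin n) F)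
    (hV₁ : V₁ = gvand x (expOmitPen n))
    (hV₂ : V₂ = gvand (fun i => l + x i) (expOmitPen n)) :
    IsUnit V₁.det ∧ IsUnit V₂.det ∧
      (∀ i j : Fin n, i < j → (V₂ * V₁⁻¹) i j = 0) ∧
      (V₁⁻¹ * V₂) * (V₁⁻¹ * V₂) = 1 ∧
      V₁⁻¹ * V₂ = V₂⁻¹ * V₁ := by
  have hnF : (n : F) = 0 := (CharP.cast_eq_zero_iff F 2 n).2 hn.two_dvd
  set L := Lmat F l n with hLdef
  have hmul : ∀ w : Fin n → F,
      L * gvand w (expOmitPen n) = gvand (fun j => l + w j) (expOmitPen n) := by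
    intro w
    ext i j
    simp only [Matrix.mul_apply, gvand, Matrix.of_apply]
    exact gvand_key hn l (w j) i
  have hL1 : V₂ = L * V₁ := by rw [hV₁, hV₂, hmul]
  have hll : l + l = 0 := by
    have h2 : (2 : F) = 0 := by exact_mod_cast CharP.cast_eq_zero F 2
    calc l + l = 2 * l := by ring
      _ = 0 := by rw [h2, zero_mul]
  have hL2 : V₁ = L * V₂ := by
    have hfun : (fun j => l + ((fun i => l + x i) j)) = x := by
      funext j; simp only []; rw [← add_assoc, hll, zero_add]
    rw [hV₁, hV₂, hmul, hfun]
  have hU1 : IsUnit V₁.det := by rw [hV₁]; exact gvand_det_isUnit x hx hsum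
  have hysum : ∑ i : Fin n, (l + x i) = ∑ i : Fin n, x i := by
    rw [Finset.sum_add_distrib, Finset.sum_const, Finset.card_univ, Fintype.card_fin,
      nsmul_eq_mul, hnF, zero_mul, zero_add]
  have hy : Function.Injective (fun i => l + x i) := by
    intro a b h
    simp only [] at h
    exact hx (add_left_cancel h)
  have hU2 : IsUnit V₂.det := by
    rw [hV₂]; exact gvand_det_isUnit _ hy (by rw [hysum]; exact hsum)
  have hV1inv : V₁ * V₁⁻¹ = 1 := Matrix.mul_nonsing_inv _ hU1
  have hV1inv' : V₁⁻¹ * V₁ = 1 := Matrix.nonsing_inv_mul _ hU1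
  have hLL : L * L = 1 := by
    have h : (L * L) * V₁ = V₁ := by rw [Matrix.mul_assoc, ← hL1, ← hL2]
    calc L * L = ((L * L) * V₁) * V₁⁻¹ := by rw [Matrix.mul_assoc, hV1inv, Matrix.mul_one]
      _ = 1 := by rw [h, hV1inv]
  have hsq : (V₁⁻¹ * V₂) * (V₁⁻¹ * V₂) = 1 := by
    rw [hL1]
    calc V₁⁻¹ * (L * V₁) * (V₁⁻¹ * (L * V₁))
        = V₁⁻¹ * (L * ((V₁ * V₁⁻¹) * (L * V₁))) := by simp only [Matrix.mul_assoc]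
      _ = V₁⁻¹ * ((L * L) * V₁) := by
          rw [hV1inv, Matrix.one_mul]; simp only [Matrix.mul_assoc]
      _ = 1 := by rw [hLL, Matrix.one_mul, hV1inv']
  refine ⟨hU1, hU2, ?_, hsq, ?_⟩
  · intro i j hij
    have hVL : V₂ * V₁⁻¹ = L := by rw [hL1, Matrix.mul_assoc, hV1inv, Matrix.mul_one]
    rw [hVL, hLdef]
    simp only [Lmat, Matrix.of_apply]
    rw [Nat.choose_eq_zero_of_lt (expOmitPen_strictMono hij), Nat.cast_zero, zero_mul]
  · have hV2' : V₂ * (V₁⁻¹ * V₂) = V₁ := by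
      calc V₂ * (V₁⁻¹ * V₂) = ((V₁ * V₁⁻¹) * V₂) * (V₁⁻¹ * V₂) := by
            rw [hV1inv, Matrix.one_mul]
        _ = V₁ * ((V₁⁻¹ * V₂) * (V₁⁻¹ * V₂)) := by simp only [Matrix.mul_assoc]
        _ = V₁ := by rw [hsq, Matrix.mul_one]
    conv_rhs => rw [← hV2']
    rw [← Matrix.mul_assoc, Matrix.nonsing_inv_mul _ hU2, Matrix.one_mul]
end

section
/- Let F be a finite field of characteristic 2 (F = F_{2^r}) and let n be even. Let x_1, …, x_{2n} ∈ F satisfy: (i) x_{n+i} = l + x_i for i = 1, …, n for some nonzero l ∈ F, (ii) x_i ≠ x_j for all i ≠ j with 1 ≤ i, j ≤ 2n, and (iii) Σ_{i=1}^n x_i ≠ 0, Σ_{i=1}^n x_{n+i} ≠ 0, and Σ_{i∈R} x_i = 0 for some subset R ⊆ {1, …, 2n} with |R| = n. Let V_1 = V_⊥((x_1, …, x_n); {n−1}) and V_2 = V_⊥((x_{n+1}, …, x_{2n}); {n−1}). Then V_1 and V_2 are invertible and V_1^{-1}V_2 is an involutory NMDS matrix, i.e., (V_1^{-1}V_2)^2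 = I_n and V_1^{-1}V_2 is NMDS. -/
section Aux
open Finset Polynomial Matrix

lemma succAbove_eq_expOmitPen {n : ℕ} (hn : 0 < n) (k : Fin n) :
    ((((⟨n - 1, by omega⟩ : Fin (n+1))).succAbove k : ℕ)) = expOmitPen n k := by
  rcases k with ⟨k, hk⟩
  unfold expOmitPen
  simp only [Fin.succAbove, Fin.castSucc_mk, Fin.lt_def]
  split_ifs with h1 h2 h2 <;> simp_all [Fin.succ_mk] <;> omega

lemma det_gvand_omitPen {F : Type*} [Field F] {n : ℕ} (hn : 0 < n) (y : Fin n → F) :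
    (gvand y (expOmitPen n)).det =
      (∑ i, y i) * ∏ i : Fin n, ∏ j ∈ Ioi i, (y j - y i) := by
  obtain ⟨m, rfl⟩ : ∃ m, n = m + 1 := ⟨n - 1, by omega⟩
  set c : F := ∏ i : Fin (m+1), ∏ j ∈ Ioi i, (y j - y i) with hc
  set w : Fin (m+2) → F[X] := Fin.cons X (fun i => C (y i)) with hw
  set D : Fin (m+2) → F := fun j => (gvand y (fun k => ((j.succAbove k : ℕ)))).det with hD
  have hdet := Matrix.det_vandermonde w
  have hprod : ∏ i : Fin (m+2), ∏ j ∈ Ioi i, (w j - w i) =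
      ((-1)^(m+1) * ∏ j : Fin (m+1), (X - C (y j))) * C c := by
    rw [Fin.prod_univ_succ]
    have h0 : ∏ j ∈ Ioi (0 : Fin (m+2)), (w j - w 0) = ∏ j : Fin (m+1), (C (y j) - X) := by
      rw [Fin.prod_Ioi_zero]; simp [hw]
    have h1 : ∀ i : Fin (m+1), ∏ j ∈ Ioi i.succ, (w j - w i.succ) =
        ∏ j ∈ Ioi i, C (y j - y i) := by
      intro i; rw [Fin.prod_Ioi_succ]; simp [hw]
    rw [h0, Finset.prod_congr rfl (fun i _ => h1 i)]
    have h2 : ∏ j : Fin (m+1), (C (y j) - X) = (-1)^(m+1) * ∏ j : Fin (m+1), (X - C (y j)) := by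
      rw [Finset.prod_congr rfl (fun j _ => show C (y j) - X = (-1) * (X - C (y j)) by ring),
        Finset.prod_mul_distrib, Finset.prod_const, Finset.card_univ, Fintype.card_fin]
    rw [h2, hc]
    simp only [map_prod, map_sub]
  have hexp : (vandermonde w).det =
      ∑ j : Fin (m+2), (-1)^(j:ℕ) * X^(j:ℕ) * C (D j) := by
    rw [Matrix.det_succ_row_zero]
    congr 1; funext j
    have hA : vandermonde w 0 j = X ^ (j : ℕ) := by simp [hw, vandermonde]
    rw [hA]
    congr 1
    have hsub : (vandermonde w).submatrix Fin.succ j.succAbove =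
        ((gvand y (fun k => ((j.succAbove k : ℕ)))).transpose).map C := by
      ext i k
      simp [vandermonde, gvand, Matrix.submatrix, hw, Matrix.map, Matrix.transpose]
    rw [hsub, Matrix.transpose_map, Matrix.det_transpose, ← RingHom.mapMatrix_apply,
      ← RingHom.map_det]
  have hkey := hexp.symm.trans (hdet.trans hprod)
  have hco := congrArg (fun p : F[X] => p.coeff m) hkey
  have hL : (∑ j : Fin (m+2), (-1:F[X])^(j:ℕ) * X^(j:ℕ) * C (D j)).coeff m
      = (-1:F)^m * D ⟨m, by omega⟩ := by
    rw [Polynomial.finset_sum_coeff]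
    rw [Finset.sum_eq_single (⟨m, by omega⟩ : Fin (m+2))]
    · have h6 : ((-1:F[X])^m) = C ((-1:F)^m) := by simp
      rw [h6, mul_assoc, coeff_C_mul, mul_comm (X^m) _, coeff_C_mul, coeff_X_pow]
      simp [mul_assoc]
    · intro j _ hj
      have hjm : (j:ℕ) ≠ m := fun h => hj (Fin.ext h)
      have h6 : ((-1:F[X])^(j:ℕ)) = C ((-1:F)^(j:ℕ)) := by simp
      rw [h6, mul_assoc, coeff_C_mul, mul_comm (X^(j:ℕ)) _, coeff_C_mul, coeff_X_pow]
      simp [hjm, Ne.symm hjm]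
    · simp
  have hR : (((-1:F[X])^(m+1) * ∏ j : Fin (m+1), (X - C (y j))) * C c).coeff m
      = (-1:F)^(m+1) * (-(∑ i, y i)) * c := by
    have h3 : ((-1:F[X])^(m+1)) = C ((-1:F)^(m+1)) := by simp
    rw [coeff_mul_C, h3, mul_comm (C ((-1:F)^(m+1))) _, coeff_mul_C]
    have h4 := prod_X_sub_C_coeff_card_pred (Finset.univ : Finset (Fin (m+1))) y
      (by simp : 0 < #(Finset.univ : Finset (Fin (m+1))))
    have h5 : #(Finset.univ : Finset (Fin (m+1))) - 1 = m := by simp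
    rw [h5] at h4
    rw [h4]; ring
  rw [hL, hR] at hco
  have hDfin : D ⟨m, by omega⟩ = (gvand y (expOmitPen (m+1))).det := by
    rw [hD]
    have he : (fun k : Fin (m+1) => (((⟨m, by omega⟩ : Fin (m+2)).succAbove k : ℕ))) =
        expOmitPen (m+1) := by
      funext k
      exact succAbove_eq_expOmitPen (by omega) k
    simp only [he]
  rw [← hDfin]
  have h2 : ((-1:F)^m) * ((-1:F)^m) = 1 := by
    rw [← pow_add]; exact Even.neg_one_pow ⟨m, rfl⟩
  have hfin := congrArg (fun t => (-1:F)^m * t) hco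
  rw [← mul_assoc, h2, one_mul] at hfin
  rw [hfin, pow_succ]
  linear_combination ((∑ i : Fin (m+1), y i) * c) * h2


lemma expOmitPen_injective (n : ℕ) : Function.Injective (expOmitPen n) := by
  intro i j hij
  unfold expOmitPen at hij
  have hi := i.isLt; have hj := j.isLt
  split_ifs at hij <;> (apply Fin.ext; omega)

lemma expOmitPen_image (n : ℕ) (hn : 0 < n) :
    Finset.univ.image (expOmitPen n) = (Finset.range (n+1)).erase (n-1) := by
  ext t
  simp only [Finset.mem_image, Finset.mem_erase, Finset.mem_range, Finset.mem_univ, true_and]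
  constructor
  · rintro ⟨i, rfl⟩
    unfold expOmitPen
    have := i.isLt
    split_ifs <;> omega
  · rintro ⟨h1, h2⟩
    by_cases ht : t = n
    · exact ⟨⟨n-1, by omega⟩, by unfold expOmitPen; simp; omega⟩
    · refine ⟨⟨t, by omega⟩, ?_⟩
      unfold expOmitPen; simp; omega

lemma gvand_shift {F : Type*} [Field F] [CharP F 2] {n : ℕ} (hn : Even n) (hn0 : 0 < n)
    (l : F) (z : Fin n → F) :
    gvand (fun j => l + z j) (expOmitPen n) =
      (Matrix.of fun i j : Fin n => (((expOmitPen n i).choose (expOmitPen n j) : F)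
          * l ^ (expOmitPen n i - expOmitPen n j))) * gvand z (expOmitPen n) := by
  have hnF : (n : F) = 0 := (CharP.cast_eq_zero_iff F 2 n).2 hn.two_dvd
  have hn2 : 2 ≤ n := by rcases hn with ⟨k,rfl⟩; omega
  ext i j
  set M := expOmitPen n i with hM
  set a := z j with ha
  have hMrange : M ≤ n - 2 ∨ M = n := by
    rw [hM]; unfold expOmitPen
    have := i.isLt
    split_ifs <;> omega
  rw [Matrix.mul_apply]
  simp only [gvand, Matrix.of_apply]
  set f : ℕ → F := fun t => (M.choose t : F) * l ^ (M - t) * a ^ t with hf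
  have hstep : ∑ k : Fin n, ((M.choose (expOmitPen n k) : F) * l ^ (M - expOmitPen n k))
        * a ^ (expOmitPen n k) = ∑ t ∈ (Finset.range (n+1)).erase (n-1), f t := by
    rw [← expOmitPen_image n hn0,
      Finset.sum_image (fun p _ q _ h => expOmitPen_injective n h)]
  have hmiss : f (n-1) = 0 := by
    simp only [hf]
    rcases hMrange with h | h
    · rw [Nat.choose_eq_zero_of_lt (by omega)]; simp
    · rw [h, Nat.choose_symm (by omega : 1 ≤ n), Nat.choose_one_right, hnF]
      simp
  have herase : ∑ t ∈ (Finset.range (n+1)).erase (n-1), f t = ∑ t ∈ Finset.range (n+1), f t :=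
    Finset.sum_erase _ hmiss
  have hcut : ∑ t ∈ Finset.range (n+1), f t = ∑ t ∈ Finset.range (M+1), f t := by
    refine (Finset.sum_subset (Finset.range_subset_range.2 (by rcases hMrange with h|h <;> omega)) ?_).symm
    intro t _ ht
    rw [Finset.mem_range, not_lt] at ht
    simp only [hf]
    rw [Nat.choose_eq_zero_of_lt (by omega)]
    simp
  have hpow : (l + a) ^ M = ∑ t ∈ Finset.range (M+1), f t := by
    rw [add_comm, add_pow]
    refine Finset.sum_congr rfl fun t _ => by simp only [hf]; ring
  calc (l + a) ^ M = ∑ t ∈ Finset.range (M+1), f t := hpow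
    _ = ∑ t ∈ (Finset.range (n+1)).erase (n-1), f t := by rw [herase, hcut]
    _ = ∑ k : Fin n, ((M.choose (expOmitPen n k) : F) * l ^ (M - expOmitPen n k))
        * a ^ (expOmitPen n k) := hstep.symm
    _ = _ := by
      refine Finset.sum_congr rfl fun k _ => ?_
      simp [gvand, mul_assoc, hM, ha]



lemma vdmprod_ne_zero {F : Type*} [Field F] {n : ℕ} {y : Fin n → F}
    (hy : Function.Injective y) :
    (∏ i : Fin n, ∏ j ∈ Ioi i, (y j - y i)) ≠ 0 := by
  rw [Finset.prod_ne_zero_iff]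
  intro i _
  rw [Finset.prod_ne_zero_iff]
  intro j hj
  have : i ≠ j := fun h => by subst h; exact absurd hj (by simp)
  exact sub_ne_zero_of_ne fun h => this (hy h.symm)

lemma isUnit_gvand_det {F : Type*} [Field F] {n : ℕ} (hn : 0 < n) {y : Fin n → F}
    (hy : Function.Injective y) (hs : ∑ i, y i ≠ 0) :
    IsUnit (gvand y (expOmitPen n)).det := by
  rw [isUnit_iff_ne_zero, det_gvand_omitPen hn y]
  exact mul_ne_zero hs (vdmprod_ne_zero hy)

/-- columns of the full gvand are LI when the sum is nonzero -/
lemma li_colVec_full {F : Type*} [Field F] {n : ℕ} (hn : 0 < n) {y : Fin n → F}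
    (hy : Function.Injective y) (hs : ∑ i, y i ≠ 0) :
    LinearIndependent F (fun j : Fin n => fun i : Fin n => y j ^ expOmitPen n i) := by
  have : IsUnit (gvand y (expOmitPen n)) :=
    (Matrix.isUnit_iff_isUnit_det _).2 (isUnit_gvand_det hn hy hs)
  have h := Matrix.linearIndependent_cols_iff_isUnit.2 this
  have he : (fun j : Fin n => fun i : Fin n => y j ^ expOmitPen n i)
      = fun j => (gvand y (expOmitPen n)).transpose j := by
    funext j i; simp [gvand, Matrix.transpose]
  rw [he]; exact h

lemma not_li_colVec_sum_zero {F : Type*} [Field F] {n : ℕ} (hn : 0 < n) {y : Fin n → F}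
    (hs : ∑ i, y i = 0) :
    ¬ LinearIndependent F (fun j : Fin n => fun i : Fin n => y j ^ expOmitPen n i) := by
  intro h
  have h' : LinearIndependent F (fun j : Fin n => (gvand y (expOmitPen n)).transpose j) := by
    have he : (fun j : Fin n => fun i : Fin n => y j ^ expOmitPen n i)
        = fun j => (gvand y (expOmitPen n)).transpose j := by
      funext j i; simp [gvand, Matrix.transpose]
    rw [← he]; exact h
  have := Matrix.linearIndependent_cols_iff_isUnit.1 h'
  rw [Matrix.isUnit_iff_isUnit_det, isUnit_iff_ne_zero, det_gvand_omitPen hn y, hs,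
    zero_mul] at this
  exact this rfl

/-- any < n columns are LI over distinct points -/
lemma li_colVec_small {F : Type*} [Field F] {n k : ℕ} (hk : k < n) {y : Fin k → F}
    (hy : Function.Injective y) :
    LinearIndependent F (fun j : Fin k => fun i : Fin n => y j ^ expOmitPen n i) := by
  set π : (Fin n → F) →ₗ[F] (Fin k → F) :=
    LinearMap.funLeft F F (fun t : Fin k => (Fin.castLE hk.le t)) with hπ
  have hcomp : (π ∘ fun j : Fin k => fun i : Fin n => y j ^ expOmitPen n i)
      = fun j : Fin k => (Matrix.vandermonde y) j := by
    funext j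
    funext t
    have h1 : expOmitPen n (Fin.castLE hk.le t) = (t : ℕ) := by
      unfold expOmitPen
      have := t.isLt
      simp only [Fin.coe_castLE]
      rw [if_neg (by omega)]
    simp [hπ, LinearMap.funLeft, Matrix.vandermonde, h1]
  have hv : LinearIndependent F (fun j : Fin k => (Matrix.vandermonde y) j) := by
    rw [show (fun j : Fin k => (Matrix.vandermonde y) j) = (Matrix.vandermonde y).row from rfl,
      Matrix.linearIndependent_rows_iff_isUnit, Matrix.isUnit_iff_isUnit_det,
      isUnit_iff_ne_zero, Matrix.det_vandermonde_ne_zero_iff]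
    exact hy
  exact LinearIndependent.of_comp π (hcomp ▸ hv)


end Aux

open Finset Polynomial Matrix

/-- involutory NMDS matrices from generalized Vandermonde matrices
`V_⊥(·;{n-1})` over `F_{2^r}` with `n` even. -/
theorem genVandermonde_omitPen_involutory_NMDS {F : Type*} [Field F] [Fintype F] [CharP F 2]
    {n : ℕ} (hn : Even n)
    (x : Fin (n + n) → F) (l : F) (hl : l ≠ 0)
    (hshift : ∀ i : Fin n, x (Fin.natAdd n i) = l + x (Fin.castAdd n i))
    (hx : Function.Injective x)
    (hsum₁ : ∑ i : Fin n, x (Fin.castAdd n i) ≠ 0)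
    (hsum₂ : ∑ i : Fin n, x (Fin.natAdd n i) ≠ 0)
    (hzero : ∃ R : Finset (Fin (n + n)), R.card = n ∧ ∑ i ∈ R, x i = 0)
    (V₁ V₂ : Matrix (Fin n) (Fin n) F)
    (hV₁ : V₁ = gvand (fun i => x (Fin.castAdd n i)) (expOmitPen n))
    (hV₂ : V₂ = gvand (fun i => x (Fin.natAdd n i)) (expOmitPen n)) :
    IsUnit V₁.det ∧ IsUnit V₂.det ∧
      (V₁⁻¹ * V₂) * (V₁⁻¹ * V₂) = 1 ∧ IsNMDSMatrix (V₁⁻¹ * V₂) := by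
  have hn0 : 0 < n := by
    rcases Nat.eq_zero_or_pos n with h | h
    · exfalso; apply hsum₁; subst h; simp
    · exact h
  -- injectivity of the two halves
  have hx1 : Function.Injective (fun i : Fin n => x (Fin.castAdd n i)) := by
    intro a b h
    exact Fin.ext (by simpa using congrArg Fin.val (hx h))
  have hx2 : Function.Injective (fun i : Fin n => x (Fin.natAdd n i)) := by
    intro a b h
    have := congrArg Fin.val (hx h)
    simp [Fin.natAdd] at this
    exact Fin.ext this
  have hdet₁ : IsUnit V₁.det := hV₁ ▸ isUnit_gvand_det hn0 hx1 hsum₁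
  have hdet₂ : IsUnit V₂.det := hV₂ ▸ isUnit_gvand_det hn0 hx2 hsum₂
  -- involution
  set B : Matrix (Fin n) (Fin n) F :=
    Matrix.of fun i j : Fin n => (((expOmitPen n i).choose (expOmitPen n j) : F)
      * l ^ (expOmitPen n i - expOmitPen n j)) with hB
  have hBV₂ : V₂ = B * V₁ := by
    rw [hV₂, hV₁, show (fun i : Fin n => x (Fin.natAdd n i))
        = fun i : Fin n => l + x (Fin.castAdd n i) from funext hshift]
    exact gvand_shift hn hn0 l _
  have hBV₁ : V₁ = B * V₂ := by
    rw [hV₁, hV₂, show (fun i : Fin n => x (Fin.castAdd n i))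
        = fun i : Fin n => l + x (Fin.natAdd n i) from funext fun i => by
          rw [hshift i, ← add_assoc, CharTwo.add_self_eq_zero, zero_add]]
    exact gvand_shift hn hn0 l _
  have hsq : (V₁⁻¹ * V₂) * (V₁⁻¹ * V₂) = 1 := by
    have h1 : V₂ * V₁⁻¹ = B := by
      rw [hBV₂, Matrix.mul_assoc, Matrix.mul_nonsing_inv _ hdet₁, Matrix.mul_one]
    calc (V₁⁻¹ * V₂) * (V₁⁻¹ * V₂) = V₁⁻¹ * ((V₂ * V₁⁻¹) * V₂) := by
          simp only [Matrix.mul_assoc]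
      _ = V₁⁻¹ * V₁ := by rw [h1, ← hBV₁]
      _ = 1 := Matrix.nonsing_inv_mul _ hdet₁
  refine ⟨hdet₁, hdet₂, hsq, ?_⟩
  -- NMDS part
  set A : Matrix (Fin n) (Fin n) F := V₁⁻¹ * V₂ with hA
  set X : Fin n ⊕ Fin n → F := fun j => x (finSumFinEquiv j) with hX
  have hXinj : Function.Injective X := hx.comp finSumFinEquiv.injective
  set cM : Fin n ⊕ Fin n → (Fin n → F) := fun j => (fromCols 1 A).transpose j with hcM
  set cV : Fin n ⊕ Fin n → (Fin n → F) := fun j => fun i => X j ^ expOmitPen n i with hcV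
  have hV₁A : V₁ * fromCols 1 A = fromCols V₁ V₂ := by
    rw [Matrix.mul_fromCols, Matrix.mul_one, hA, ← Matrix.mul_assoc,
      Matrix.mul_nonsing_inv _ hdet₁, Matrix.one_mul]
  have hLV : ∀ j, cV j = V₁.mulVecLin (cM j) := by
    intro j
    funext i
    have h1 : V₁.mulVecLin (cM j) i = (V₁ * fromCols 1 A) i j := by
      simp [Matrix.mulVecLin, Matrix.mulVec, Matrix.mul_apply, hcM, Matrix.transpose,
        dotProduct]
    rw [h1, hV₁A]
    cases j with
    | inl a => simp [hcV, hX, hV₁, gvand, Matrix.fromCols]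
    | inr a => simp [hcV, hX, hV₂, gvand, Matrix.fromCols]
  have hker : LinearMap.ker V₁.mulVecLin = ⊥ := by
    rw [LinearMap.ker_eq_bot]
    exact Matrix.mulVec_injective_iff_isUnit.2 ((Matrix.isUnit_iff_isUnit_det _).2 hdet₁)
  have htrans : ∀ {ι : Type} (v : ι → Fin n ⊕ Fin n),
      LinearIndependent F (cM ∘ v) ↔ LinearIndependent F (cV ∘ v) := by
    intro ι v
    rw [← LinearMap.linearIndependent_iff (V₁.mulVecLin) hker (v := cM ∘ v)]
    have : V₁.mulVecLin ∘ (cM ∘ v) = cV ∘ v := by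
      funext t; exact (hLV (v t)).symm
    rw [this]
  refine ⟨?_, ?_, ?_⟩
  · -- (i) every n-1 columns LI
    intro S hS
    have eS : {j // j ∈ S} ≃ Fin (n-1) := S.equivFin.trans (finCongr hS)
    rw [← linearIndependent_equiv eS.symm]
    have : (fun j : S => cM j.1) ∘ eS.symm = cM ∘ (fun t => (eS.symm t).1) := rfl
    rw [this, htrans]
    have heq : cV ∘ (fun t : Fin (n-1) => (eS.symm t).1)
        = fun t : Fin (n-1) => fun i : Fin n => (X ((eS.symm t).1)) ^ expOmitPen n i := rfl
    rw [heq]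
    exact li_colVec_small (by omega)
      (hXinj.comp (Subtype.val_injective.comp eS.symm.injective))
  · -- (ii) some n columns dependent
    obtain ⟨R, hRcard, hRsum⟩ := hzero
    refine ⟨R.map ⟨finSumFinEquiv.symm, finSumFinEquiv.symm.injective⟩, by simp [hRcard], ?_⟩
    set S := R.map ⟨finSumFinEquiv.symm, finSumFinEquiv.symm.injective⟩ with hSdef
    intro hLI
    have hScard : S.card = n := by simp [hSdef, hRcard]
    have eS : {j // j ∈ S} ≃ Fin n := S.equivFin.trans (finCongr hScard)
    rw [← linearIndependent_equiv eS.symm] at hLI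
    have : (fun j : S => cM j.1) ∘ eS.symm = cM ∘ (fun t => (eS.symm t).1) := rfl
    rw [this, htrans] at hLI
    have hsum0 : ∑ t : Fin n, X ((eS.symm t).1) = 0 := by
      rw [Equiv.sum_comp eS.symm (fun j : S => X j.1)]
      rw [Finset.sum_coe_sort S X]
      rw [hSdef, Finset.sum_map]
      simpa [hX] using hRsum
    exact not_li_colVec_sum_zero hn0 hsum0 hLI
  · -- (iii) every n+1 columns span dim n
    intro S hS
    -- find T ⊆ S with card n and nonzero sum
    have hTex : ∃ T ⊆ S, T.card = n ∧ ∑ j ∈ T, X j ≠ 0 := by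
      have h2 : 1 < S.card := by omega
      obtain ⟨a, ha, b, hb, hab⟩ := Finset.one_lt_card.1 h2
      by_cases hea : ∑ j ∈ S.erase a, X j ≠ 0
      · exact ⟨S.erase a, Finset.erase_subset _ _, by rw [Finset.card_erase_of_mem ha]; omega, hea⟩
      · push_neg at hea
        refine ⟨S.erase b, Finset.erase_subset _ _, by rw [Finset.card_erase_of_mem hb]; omega, ?_⟩
        intro heb
        have h3 := Finset.add_sum_erase S X ha
        have h4 := Finset.add_sum_erase S X hb
        rw [hea, add_zero] at h3
        rw [heb, add_zero] at h4
        exact hab (hXinj (h3.trans h4.symm))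
    obtain ⟨T, hTS, hTcard, hTsum⟩ := hTex
    have hinj : Function.Injective V₁.mulVecLin := LinearMap.ker_eq_bot.1 hker
    -- rank of span of cV-image
    have hmap : Submodule.map V₁.mulVecLin (Submodule.span F (cM '' S))
        = Submodule.span F (cV '' S) := by
      rw [Submodule.map_span, ← Set.image_comp]
      have hfe : V₁.mulVecLin ∘ cM = cV := funext fun j => (hLV j).symm
      rw [hfe]
    have hrk : Module.finrank F (Submodule.span F (cM '' (S : Set (Fin n ⊕ Fin n))))
        = Module.finrank F (Submodule.span F (cV '' (S : Set (Fin n ⊕ Fin n)))) := by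
      rw [← hmap]
      exact LinearEquiv.finrank_eq (Submodule.equivMapOfInjective _ hinj _)
    have hle : Module.finrank F (Submodule.span F (cV '' (S : Set (Fin n ⊕ Fin n)))) ≤ n := by
      have := Submodule.finrank_le (Submodule.span F (cV '' (S : Set (Fin n ⊕ Fin n))))
      rwa [Module.finrank_fintype_fun_eq_card, Fintype.card_fin] at this
    have hge : n ≤ Module.finrank F (Submodule.span F (cV '' (S : Set (Fin n ⊕ Fin n)))) := by
      have eT : {j // j ∈ T} ≃ Fin n := T.equivFin.trans (finCongr hTcard)
      set b : Fin n → (Fin n → F) := fun t => cV ((eT.symm t).1) with hb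
      have hbLI : LinearIndependent F b := by
        have hsumb : ∑ t : Fin n, X ((eT.symm t).1) ≠ 0 := by
          rw [Equiv.sum_comp eT.symm (fun j : T => X j.1), Finset.sum_coe_sort T X]
          exact hTsum
        exact li_colVec_full hn0
          (hXinj.comp (Subtype.val_injective.comp eT.symm.injective)) hsumb
      have hrange : Set.range b = cV '' (T : Set (Fin n ⊕ Fin n)) := by
        have h6 : Set.range (fun t : Fin n => cV ((eT.symm t).1))
            = cV '' (Set.range (fun t : Fin n => ((eT.symm t).1))) := Set.range_comp cV _
        rw [hb, h6]
        congr 1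
        have h7 : Set.range (fun t : Fin n => ((eT.symm t).1))
            = Subtype.val '' (Set.range eT.symm) := Set.range_comp _ _
        rw [h7, Equiv.range_eq_univ, Set.image_univ, Subtype.range_coe]
      have h5 : Module.finrank F (Submodule.span F (Set.range b)) = n := by
        rw [finrank_span_eq_card hbLI, Fintype.card_fin]
      calc n = Module.finrank F (Submodule.span F (Set.range b)) := h5.symm
        _ ≤ _ := by
            rw [hrange]
            exact Submodule.finrank_mono (Submodule.span_mono (Set.image_mono hTS))
    have : Module.finrank F (Submodule.span F (cV '' (S : Set (Fin n ⊕ Fin n)))) = n :=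
      le_antisymm hle hge
    exact hrk.trans this
end

section
/- Let F_q be a finite field and let x_1, …, x_{2n} ∈ F_q be 2n pairwise distinct nonzero elements such that Σ_{i∈R} x_i^{-1} ≠ 0 for every subset R ⊆ {1, …, 2n} with |R| = n. Let V_1 = V_⊥((x_1, …, x_n); {1}) and V_2 = V_⊥((x_{n+1}, …, x_{2n}); {1}). Then V_1 and V_2 are invertible, and every square submatrix of V_1^{-1}V_2 and of V_2^{-1}V_1 is nonsingular; in particular V_1^{-1}V_2 and V_2^{-1}V_1 are MDS matrices. -/
open Polynomial Matrix

lemma expOmitOne_inj {n : ℕ} : Function.Injective (expOmitOne n) := by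
  intro i j hij
  unfold expOmitOne at hij
  split_ifs at hij <;> exact Fin.ext (by omega)

lemma expOmitOne_ne_one {n : ℕ} (i : Fin n) : expOmitOne n i ≠ 1 := by
  unfold expOmitOne; split_ifs with h <;> omega

lemma expOmitOne_le {n : ℕ} (i : Fin n) : expOmitOne n i ≤ n := by
  have := i.isLt; unfold expOmitOne; split_ifs with h <;> omega

lemma coeff01_prod_one_sub {F : Type*} [Field F] (s : Finset F) (c : F → F) :
    (∏ j ∈ s, (1 - C (c j) * X)).coeff 0 = 1 ∧
    (∏ j ∈ s, (1 - C (c j) * X)).coeff 1 = -∑ j ∈ s, c j := by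
  classical
  induction s using Finset.cons_induction with
  | empty => simp [coeff_one]
  | cons a s ha ih =>
    rw [Finset.prod_cons, Finset.sum_cons]
    have h : (1 - C (c a) * X) * ∏ j ∈ s, (1 - C (c j) * X)
        = (∏ j ∈ s, (1 - C (c j) * X)) - C (c a) * (X * ∏ j ∈ s, (1 - C (c j) * X)) := by
      ring
    rw [h]
    constructor
    · simp [coeff_sub, coeff_C_mul, mul_coeff_zero, ih.1]
    · have : (X * ∏ j ∈ s, (1 - C (c j) * X)).coeff 1
          = (∏ j ∈ s, (1 - C (c j) * X)).coeff 0 := coeff_X_mul _ 0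
      rw [coeff_sub, coeff_C_mul, this, ih.1, ih.2]
      ring

lemma det_gvand_omitOne_ne_zero {F : Type*} [Field F] {n : ℕ} (y : Fin n → F)
    (hy : Function.Injective y) (hy0 : ∀ j, y j ≠ 0)
    (hs : ∑ j, (y j)⁻¹ ≠ 0) : (gvand y (expOmitOne n)).det ≠ 0 := by
  classical
  intro hdet
  obtain ⟨v, hv0, hv⟩ := Matrix.exists_vecMul_eq_zero_iff.mpr hdet
  set p : F[X] := ∑ i : Fin n, C (v i) * X ^ (expOmitOne n i) with hp
  have hcoeff : ∀ i, p.coeff (expOmitOne n i) = v i := by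
    intro i
    rw [hp, finset_sum_coeff]
    rw [Finset.sum_eq_single i]
    · simp
    · intro b _ hb
      rw [coeff_C_mul, coeff_X_pow, if_neg (fun h => hb (expOmitOne_inj h.symm))]
      ring
    · simp
  have hpne : p ≠ 0 := by
    obtain ⟨i, hi⟩ := Function.ne_iff.mp hv0
    intro h
    simpa [← hcoeff i, h] using hi
  have hdeg : p.natDegree ≤ n := by
    apply natDegree_sum_le_of_forall_le
    intro i _
    exact le_trans (natDegree_C_mul_le _ _) (by simp [expOmitOne_le i])
  have hroots : ∀ j, p.IsRoot (y j) := by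
    intro j
    have := congrFun hv j
    simp only [Matrix.vecMul, dotProduct, gvand, Matrix.of_apply, Pi.zero_apply] at this
    simpa [p, IsRoot, eval_finset_sum] using this
  set s : Finset F := Finset.univ.image y with hsdef
  have hscard : s.card = n := by
    rw [hsdef, Finset.card_image_of_injective _ hy, Finset.card_univ, Fintype.card_fin]
  have hle : s.val ≤ p.roots := by
    rw [Multiset.le_iff_subset s.nodup]
    intro a ha
    rw [Polynomial.mem_roots hpne]
    obtain ⟨j, _, rfl⟩ := Finset.mem_image.mp (show a ∈ Finset.univ.image y from ha)
    exact hroots j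
  have hdvd : (s.val.map fun a => X - C a).prod ∣ p :=
    (Multiset.prod_X_sub_C_dvd_iff_le_roots hpne s.val).mpr hle
  obtain ⟨r, hr⟩ := hdvd
  set q : F[X] := (s.val.map fun a => X - C a).prod with hq
  have hqdeg : q.natDegree = n := by
    rw [hq, natDegree_multiset_prod_X_sub_C_eq_card]
    exact hscard
  have hrne : r ≠ 0 := by rintro rfl; rw [mul_zero] at hr; exact hpne hr
  have hqne : q ≠ 0 := by rintro h; rw [h, zero_mul] at hr; exact hpne hr
  have hrdeg : r.natDegree = 0 := by
    have := natDegree_mul hqne hrne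
    rw [← hr, hqdeg] at this
    omega
  have hrC : r = C (r.coeff 0) := eq_C_of_natDegree_eq_zero hrdeg
  have hc0 : r.coeff 0 ≠ 0 := fun h => hrne (by rw [hrC, h, map_zero])
  -- coefficient 1 of p is zero
  have hp1 : p.coeff 1 = 0 := by
    rw [hp, finset_sum_coeff]
    apply Finset.sum_eq_zero
    intro i _
    rw [coeff_C_mul, coeff_X_pow, if_neg (fun h => expOmitOne_ne_one i h.symm)]
    ring
  -- rewrite q
  have hq' : q = C (∏ a ∈ s, -a) * ∏ a ∈ s, (1 - C a⁻¹ * X) := by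
    rw [hq, ← Finset.prod_eq_multiset_prod, map_prod, ← Finset.prod_mul_distrib]
    apply Finset.prod_congr rfl
    intro a ha
    have ha0 : a ≠ 0 := by
      obtain ⟨j, _, rfl⟩ := Finset.mem_image.mp ha
      exact hy0 j
    have hCa : C a * C a⁻¹ = 1 := by rw [← C_mul, mul_inv_cancel₀ ha0, C_1]
    rw [map_neg]
    linear_combination (-(X : F[X])) * hCa
  have hsuminv : ∑ a ∈ s, a⁻¹ = ∑ j, (y j)⁻¹ := by
    rw [hsdef, Finset.sum_image (fun a _ b _ h => hy h)]
  have hq1 : q.coeff 1 = (∏ a ∈ s, -a) * -∑ j, (y j)⁻¹ := by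
    rw [hq', coeff_C_mul, (coeff01_prod_one_sub s (fun a => a⁻¹)).2, hsuminv]
  have hprodne : (∏ a ∈ s, -a) ≠ 0 := by
    apply Finset.prod_ne_zero_iff.mpr
    intro a ha
    obtain ⟨j, _, rfl⟩ := Finset.mem_image.mp ha
    simpa using hy0 j
  have : p.coeff 1 = q.coeff 1 * r.coeff 0 := by
    conv_lhs => rw [hr, hrC, coeff_mul_C]
  rw [hp1, hq1] at this
  exact (mul_ne_zero (mul_ne_zero hprodne (neg_ne_zero.mpr hs)) hc0) this.symm


lemma det_gvand_comp_ne_zero {F : Type*} [Field F] {n : ℕ} (x : Fin (n + n) → F)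
    (hx : Function.Injective x) (hx0 : ∀ i, x i ≠ 0)
    (hsum : ∀ R : Finset (Fin (n + n)), R.card = n → ∑ i ∈ R, (x i)⁻¹ ≠ 0)
    (ι : Fin n → Fin (n + n)) (hι : Function.Injective ι) :
    (gvand (x ∘ ι) (expOmitOne n)).det ≠ 0 := by
  classical
  apply det_gvand_omitOne_ne_zero
  · exact hx.comp hι
  · intro j; exact hx0 _
  · have h1 : ∑ j : Fin n, ((x ∘ ι) j)⁻¹ = ∑ i ∈ Finset.univ.image ι, (x i)⁻¹ := by
      rw [Finset.sum_image (fun a _ b _ h => hι h)]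
      rfl
    rw [h1]
    exact hsum _ (by rw [Finset.card_image_of_injective _ hι, Finset.card_univ,
      Fintype.card_fin])

lemma minor_ne_zero {F : Type*} [Field F] {n k : ℕ} (x : Fin (n + n) → F)
    (hx : Function.Injective x) (hx0 : ∀ i, x i ≠ 0)
    (hsum : ∀ R : Finset (Fin (n + n)), R.card = n → ∑ i ∈ R, (x i)⁻¹ ≠ 0)
    (r c : Fin k → Fin n) (hr : Function.Injective r) (hc : Function.Injective c) :
    ((((gvand (fun i => x (Fin.castAdd n i)) (expOmitOne n))⁻¹ *
      gvand (fun i => x (Fin.natAdd n i)) (expOmitOne n)).submatrix r c)).det ≠ 0 := by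
  classical
  set V₁ := gvand (fun i => x (Fin.castAdd n i)) (expOmitOne n) with hV₁
  set V₂ := gvand (fun i => x (Fin.natAdd n i)) (expOmitOne n) with hV₂
  have hcast : Function.Injective (Fin.castAdd n : Fin n → Fin (n + n)) := by
    intro a b h; exact Fin.ext (by simpa using congrArg Fin.val h)
  have hnat : Function.Injective (Fin.natAdd n : Fin n → Fin (n + n)) := by
    intro a b h
    have hv : n + (a : ℕ) = n + (b : ℕ) := congrArg Fin.val h
    exact Fin.ext (by omega)
  have hd1 : V₁.det ≠ 0 := by
    have := det_gvand_comp_ne_zero x hx hx0 hsum _ hcast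
    exact this
  have hd2 : V₂.det ≠ 0 := by
    have := det_gvand_comp_ne_zero x hx hx0 hsum _ hnat
    exact this
  set A := V₁⁻¹ * V₂ with hA
  set e : (Fin k ⊕ ((Set.range r)ᶜ : Set (Fin n))) ≃ Fin n :=
    (Equiv.sumCongr (Equiv.ofInjective r hr) (Equiv.refl _)).trans
      (Equiv.Set.sumCompl (Set.range r)) with he
  have he_inl : ∀ t, e (Sum.inl t) = r t := by intro t; simp [he]
  have he_inr : ∀ u, e (Sum.inr u) = u.1 := by intro u; simp [he]
  set ι : Fin n → Fin (n + n) := fun j =>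
    Sum.elim (fun t => Fin.natAdd n (c t)) (fun u => Fin.castAdd n u.1) (e.symm j) with hι
  have hιinj : Function.Injective ι := by
    intro j j' h
    have hj : j = e (e.symm j) := (e.apply_symm_apply j).symm
    have hj' : j' = e (e.symm j') := (e.apply_symm_apply j').symm
    have h' : Sum.elim (fun t => Fin.natAdd n (c t)) (fun u => Fin.castAdd n u.1) (e.symm j)
        = Sum.elim (fun t => Fin.natAdd n (c t)) (fun u => Fin.castAdd n u.1) (e.symm j') := h
    rcases hs1 : e.symm j with t | u <;> rcases hs2 : e.symm j' with t' | u' <;>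
        rw [hs1, hs2] at h' <;> simp only [Sum.elim_inl, Sum.elim_inr] at h'
    · rw [hj, hj', hs1, hs2, hc (hnat h')]
    · have hv : n + ((c t : Fin n) : ℕ) = ((u'.1 : Fin n) : ℕ) := congrArg Fin.val h'
      have hlt : ((u'.1 : Fin n) : ℕ) < n := (u'.1).isLt
      omega
    · have hv : n + ((c t' : Fin n) : ℕ) = ((u.1 : Fin n) : ℕ) := (congrArg Fin.val h').symm
      have hlt : ((u.1 : Fin n) : ℕ) < n := (u.1).isLt
      omega
    · rw [hj, hj', hs1, hs2, Subtype.ext (hcast h')]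
  set B := gvand (x ∘ ι) (expOmitOne n) with hB
  have hdB : B.det ≠ 0 := det_gvand_comp_ne_zero x hx hx0 hsum ι hιinj
  have hBcol1 : ∀ i t, B i (e (Sum.inl t)) = V₂ i (c t) := by
    intro i t
    rw [hB, hV₂]
    simp [gvand, hι]
  have hBcol2 : ∀ i u, B i (e (Sum.inr u)) = V₁ i u.1 := by
    intro i u
    rw [hB, hV₁]
    simp [gvand, hι]
  set M := V₁⁻¹ * B with hM
  have hMN : ∀ i j, M i j =
      Sum.elim (fun t => A i (c t)) (fun u => if i = u.1 then (1 : F) else 0) (e.symm j) := by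
    intro i j
    obtain ⟨j', rfl⟩ := e.surjective j
    rw [Equiv.symm_apply_apply]
    cases j' with
    | inl t =>
      simp only [Sum.elim_inl]
      rw [hM, hA, Matrix.mul_apply, Matrix.mul_apply]
      exact Finset.sum_congr rfl fun l _ => by rw [hBcol1]
    | inr u =>
      simp only [Sum.elim_inr]
      have h1 : M i (e (Sum.inr u)) = (V₁⁻¹ * V₁) i u.1 := by
        rw [hM, Matrix.mul_apply, Matrix.mul_apply]
        exact Finset.sum_congr rfl fun l _ => by rw [hBcol2]
      rw [h1, Matrix.nonsing_inv_mul _ (isUnit_iff_ne_zero.mpr hd1), Matrix.one_apply]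
  have hMN' : ∀ p q, M (e p) (e q) =
      Sum.elim (fun t => A (e p) (c t)) (fun u => if e p = u.1 then (1 : F) else 0) q := by
    intro p q; rw [hMN, Equiv.symm_apply_apply]
  have hsub : M.submatrix e e =
      Matrix.fromBlocks (A.submatrix r c) 0
        (Matrix.of fun (u : ((Set.range r)ᶜ : Set (Fin n))) t => A u.1 (c t)) 1 := by
    ext i j
    cases i with
    | inl s =>
      cases j with
      | inl t =>
        rw [Matrix.submatrix_apply, hMN']
        simp [he_inl]
      | inr u =>
        rw [Matrix.submatrix_apply, hMN']
        simp only [Sum.elim_inr, Matrix.fromBlocks_apply₁₂, Matrix.zero_apply, he_inl]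
        rw [if_neg]
        exact fun h => u.2 ⟨s, h⟩
    | inr u =>
      cases j with
      | inl t =>
        rw [Matrix.submatrix_apply, hMN']
        simp [he_inr]
      | inr u' =>
        rw [Matrix.submatrix_apply, hMN']
        simp only [Sum.elim_inr, Matrix.fromBlocks_apply₂₂, he_inr]
        rw [Matrix.one_apply]
        simp [Subtype.ext_iff]
  have hdetM : M.det = (A.submatrix r c).det := by
    rw [← Matrix.det_submatrix_equiv_self e, hsub, Matrix.det_fromBlocks_zero₁₂,
      Matrix.det_one, mul_one]
  have hMne : M.det ≠ 0 := by
    rw [hM, Matrix.det_mul, Matrix.det_nonsing_inv, Ring.inverse_eq_inv']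
    exact mul_ne_zero (inv_ne_zero hd1) hdB
  rw [hdetM] at hMne
  exact hMne

/-- MDS matrices from generalized Vandermonde matrices `V_⊥(·;{1})`. -/
theorem genVandermonde_omitOne_MDS {F : Type*} [Field F] [Fintype F] {n : ℕ}
    (x : Fin (n + n) → F) (hx : Function.Injective x) (hx0 : ∀ i, x i ≠ 0)
    (hsum : ∀ R : Finset (Fin (n + n)), R.card = n → ∑ i ∈ R, (x i)⁻¹ ≠ 0)
    (V₁ V₂ : Matrix (Fin n) (Fin n) F)
    (hV₁ : V₁ = gvand (fun i => x (Fin.castAdd n i)) (expOmitOne n))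
    (hV₂ : V₂ = gvand (fun i => x (Fin.natAdd n i)) (expOmitOne n)) :
    IsUnit V₁.det ∧ IsUnit V₂.det ∧ IsMDS (V₁⁻¹ * V₂) ∧ IsMDS (V₂⁻¹ * V₁) := by
  subst hV₁ hV₂
  classical
  have hcast : Function.Injective (Fin.castAdd n : Fin n → Fin (n + n)) := by
    intro a b h; exact Fin.ext (by simpa using congrArg Fin.val h)
  have hnat : Function.Injective (Fin.natAdd n : Fin n → Fin (n + n)) := by
    intro a b h
    have hv : n + (a : ℕ) = n + (b : ℕ) := congrArg Fin.val h
    exact Fin.ext (by omega)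
  have hd1 : (gvand (fun i => x (Fin.castAdd n i)) (expOmitOne n)).det ≠ 0 := by
    have := det_gvand_comp_ne_zero x hx hx0 hsum _ hcast
    exact this
  have hd2 : (gvand (fun i => x (Fin.natAdd n i)) (expOmitOne n)).det ≠ 0 :=
    det_gvand_comp_ne_zero x hx hx0 hsum _ hnat
  refine ⟨isUnit_iff_ne_zero.mpr hd1, isUnit_iff_ne_zero.mpr hd2, ?_, ?_⟩
  · intro k r c hr hc
    exact minor_ne_zero x hx hx0 hsum r c hr hc
  · intro k r c hr hc
    set x' : Fin (n + n) → F := fun i => x (finAddFlip i) with hx'def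
    have hx' : Function.Injective x' := hx.comp finAddFlip.injective
    have hx0' : ∀ i, x' i ≠ 0 := fun i => hx0 _
    have hsum' : ∀ R : Finset (Fin (n + n)), R.card = n → ∑ i ∈ R, (x' i)⁻¹ ≠ 0 := by
      intro R hR
      have h1 : ∑ i ∈ R, (x' i)⁻¹ = ∑ j ∈ R.image finAddFlip, (x j)⁻¹ := by
        rw [Finset.sum_image (fun a _ b _ h => finAddFlip.injective h)]
      rw [h1]
      exact hsum _ (by rw [Finset.card_image_of_injective _ finAddFlip.injective, hR])
    have e1 : (fun i => x' (Fin.castAdd n i)) = fun i => x (Fin.natAdd n i) := by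
      funext i; exact congrArg x (finAddFlip_apply_castAdd i n)
    have e2 : (fun i => x' (Fin.natAdd n i)) = fun i => x (Fin.castAdd n i) := by
      funext i; exact congrArg x (finAddFlip_apply_natAdd i n)
    have := minor_ne_zero x' hx' hx0' hsum' r c hr hc
    rw [e1, e2] at this
    exact this
end

section
/- Let F be a field, let g(x) be a monic polynomial of degree n over F with n distinct roots λ_1, …, λ_n ∈ F, and let m be a nonnegative integer. Let G' be the n×2n matrix whose i-th row is (1, λ_i, λ_i², …, λ_i^{n−1}, λ_i^m, λ_i^{m+1}, …, λ_i^{m+n−1}). Then the row space of G' equals the row space of the n×2n block matrix [I_n | (C_gᵀ)^m], where C_g is the companion matrix of g. -/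
open Polynomial

/-- The companion matrix of the monic polynomial
`g(x) = a 0 + a 1 • x + ⋯ + a (n-1) • x^(n-1) + x^n`. -/
def companion {F : Type*} [Field F] {n : ℕ} (a : Fin n → F) : Matrix (Fin n) (Fin n) F :=
  Matrix.of fun i j =>
    if (i : ℕ) = n - 1 then -a j else if (j : ℕ) = (i : ℕ) + 1 then 1 else 0

lemma span_rows_mul_le {F : Type*} [Field F] {n : ℕ} {p : Type*}
    (M : Matrix (Fin n) (Fin n) F) (A : Matrix (Fin n) p F) :
    Submodule.span F (Set.range fun i => (M * A) i) ≤
      Submodule.span F (Set.range fun i => A i) := by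
  rw [Submodule.span_le]
  rintro _ ⟨i, rfl⟩
  have h : (M * A) i = ∑ k, M i k • A k := by
    ext j; simp [Matrix.mul_apply, Finset.sum_apply]
  show (M * A) i ∈ _
  rw [h]
  exact Submodule.sum_mem _ fun k _ =>
    Submodule.smul_mem _ _ (Submodule.subset_span ⟨k, rfl⟩)

lemma span_rows_mul_eq {F : Type*} [Field F] {n : ℕ} {p : Type*}
    (M : Matrix (Fin n) (Fin n) F) (hM : IsUnit M.det) (A : Matrix (Fin n) p F) :
    Submodule.span F (Set.range fun i => (M * A) i) =
      Submodule.span F (Set.range fun i => A i) := by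
  refine le_antisymm (span_rows_mul_le M A) ?_
  have h : A = M⁻¹ * (M * A) := by
    rw [← Matrix.mul_assoc, Matrix.nonsing_inv_mul M hM, Matrix.one_mul]
  conv_lhs => rw [h]
  exact span_rows_mul_le _ _


/-- the row space of `G' = [ (λ_i^j)_{j<n} | (λ_i^{m+j})_{j<n} ]` equals the
row space of `[I | (C_gᵀ)^m]`, when `g` has `n` distinct roots `λ_1, …, λ_n`. -/
theorem rowSpace_genVandermonde_eq_rowSpace_companion {F : Type*} [Field F] {n : ℕ}
    (lam a : Fin n → F) (hinj : Function.Injective lam)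
    (hg : ∏ i : Fin n, (X - C (lam i)) =
        X ^ n + ∑ i : Fin n, C (a i) * X ^ (i : ℕ))
    (m : ℕ) :
    Submodule.span F (Set.range fun i =>
        Matrix.fromCols (Matrix.of fun i j : Fin n => lam i ^ (j : ℕ))
          (Matrix.of fun i j : Fin n => lam i ^ (m + (j : ℕ))) i) =
      Submodule.span F (Set.range fun i =>
        Matrix.fromCols (1 : Matrix (Fin n) (Fin n) F) ((companion a).transpose ^ m) i) := by
  rcases Nat.eq_zero_or_pos n with hn | hn
  · subst hn
    simp
  have hroot : ∀ i, lam i ^ n + ∑ j, a j * lam i ^ (j : ℕ) = 0 := by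
    intro i
    have hL : Polynomial.eval (lam i) (∏ j : Fin n, (X - C (lam j))) = 0 := by
      rw [Polynomial.eval_prod]
      exact Finset.prod_eq_zero (Finset.mem_univ i) (by simp)
    have hR := congrArg (Polynomial.eval (lam i)) hg
    rw [hL] at hR
    simpa [Polynomial.eval_finset_sum] using hR.symm
  have hstep : ∀ M : ℕ,
      (Matrix.of fun i j : Fin n => lam i ^ (M + (j : ℕ))) * (companion a).transpose =
        Matrix.of fun i j : Fin n => lam i ^ (M + 1 + (j : ℕ)) := by
    intro M
    ext i j
    rw [Matrix.mul_apply]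
    simp only [Matrix.transpose_apply, Matrix.of_apply, companion]
    by_cases hj : (j : ℕ) = n - 1
    · have hcs : ∀ k : Fin n,
          (if (j : ℕ) = n - 1 then -a k else if (k : ℕ) = (j : ℕ) + 1 then 1 else 0) = -a k :=
        fun k => if_pos hj
      simp only [hcs]
      have hsum : ∑ k : Fin n, lam i ^ (M + (k : ℕ)) * -a k
          = -(lam i ^ M * ∑ k : Fin n, a k * lam i ^ (k : ℕ)) := by
        rw [Finset.mul_sum, ← Finset.sum_neg_distrib]
        refine Finset.sum_congr rfl fun k _ => ?_
        rw [pow_add]; ring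
      have h2 : ∑ k : Fin n, a k * lam i ^ (k : ℕ) = -(lam i ^ n) := by
        exact eq_neg_of_add_eq_zero_right (hroot i)
      rw [hsum, h2, (by omega : M + 1 + (j : ℕ) = M + n), pow_add]
      ring
    · have hjlt : (j : ℕ) + 1 < n := by omega
      have hcs : ∀ k : Fin n,
          (if (j : ℕ) = n - 1 then -a k else if (k : ℕ) = (j : ℕ) + 1 then 1 else 0)
            = if (k : ℕ) = (j : ℕ) + 1 then 1 else 0 := fun k => if_neg hj
      simp only [hcs]
      rw [Finset.sum_eq_single (⟨(j : ℕ) + 1, hjlt⟩ : Fin n)]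
      · have hv : ((⟨(j : ℕ) + 1, hjlt⟩ : Fin n) : ℕ) = (j : ℕ) + 1 := rfl
        rw [hv, if_pos rfl, mul_one]
        congr 1
        omega
      · intro k _ hk
        rw [if_neg (fun h => hk (Fin.ext h)), mul_zero]
      · intro habs
        exact absurd (Finset.mem_univ _) habs
  have hpow : ∀ M : ℕ,
      (Matrix.of fun i j : Fin n => lam i ^ (j : ℕ)) * ((companion a).transpose) ^ M =
        Matrix.of fun i j : Fin n => lam i ^ (M + (j : ℕ)) := by
    intro M
    induction M with
    | zero => simp
    | succ M ih => rw [pow_succ, ← Matrix.mul_assoc, ih, hstep]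
  have hVdet : IsUnit (Matrix.vandermonde lam).det := by
    rw [isUnit_iff_ne_zero, Matrix.det_vandermonde_ne_zero_iff]
    exact hinj
  have hvand : Matrix.vandermonde lam = Matrix.of fun i j : Fin n => lam i ^ (j : ℕ) := rfl
  have key : Matrix.fromCols (Matrix.of fun i j : Fin n => lam i ^ (j : ℕ))
      (Matrix.of fun i j : Fin n => lam i ^ (m + (j : ℕ))) =
      Matrix.vandermonde lam *
        Matrix.fromCols (1 : Matrix (Fin n) (Fin n) F) ((companion a).transpose ^ m) := by
    rw [Matrix.mul_fromCols, Matrix.mul_one, hvand, hpow m]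
  rw [key]
  exact span_rows_mul_eq _ hVdet _
end

section
/- Let F be a field, let g(x) be a monic polynomial of degree n over F with n distinct roots λ_1, …, λ_n ∈ F, and let m ≥ n be an integer. Let G' be the n×2n matrix whose i-th row is (1, λ_i, λ_i², …, λ_i^{n−1}, λ_i^m, λ_i^{m+1}, …, λ_i^{m+n−1}). Then C_g^m is an MDS matrix (every square submatrix of C_g^m is nonsingular) if and only if every n columns of G' are linearly independent. -/
open Polynomial

/-! ### Auxiliary lemmas -/

lemma linIndep_finset_iff {F : Type*} [Field F] {ι : Type*} [DecidableEq ι]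
    {N : Type*} [AddCommGroup N] [Module F N]
    (S : Finset ι) (w : ι → N) :
    LinearIndependent F (fun j : S => w j.1) ↔
      ∀ g : ι → F, ∑ j ∈ S, g j • w j = 0 → ∀ j ∈ S, g j = 0 := by
  rw [Fintype.linearIndependent_iff]
  constructor
  · intro h g hg j hj
    exact h (fun j : S => g j.1)
      (by rw [← Finset.sum_attach S (fun j => g j • w j)] at hg; exact hg) ⟨j, hj⟩
  · intro h g hg j
    have := h (fun i => if hi : i ∈ S then g ⟨i, hi⟩ else 0) ?_ j.1 j.2
    · simpa using this
    · rw [← Finset.sum_attach S (fun j => (if hj : j ∈ S then g ⟨j, hj⟩ else 0) • w j)]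
      simpa using hg

lemma mds_iff_cols {F : Type*} [Field F] {n : ℕ} (A : Matrix (Fin n) (Fin n) F) :
    IsMDS A ↔ ∀ S : Finset (Fin n ⊕ Fin n), S.card = n →
      LinearIndependent F (fun j : S =>
        (Matrix.fromCols (1 : Matrix (Fin n) (Fin n) F) A).transpose j.1) := by
  constructor
  · intro hA S hS
    refine (linIndep_finset_iff S (fun j => ((Matrix.fromCols (1 : Matrix (Fin n) (Fin n) F) A).transpose j : Fin n → F))).mpr ?_
    intro g hg
    have hcard : S.toLeft.card + S.toRight.card = n := by
      rw [Finset.card_toLeft_add_card_toRight, hS]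
    set k := S.toRight.card with hk
    have hcompl : S.toLeftᶜ.card = k := by
      rw [Finset.card_compl, Fintype.card_fin]; omega
    set c : Fin k → Fin n := fun t => ((S.toRight.orderIsoOfFin rfl) t : Fin n) with hc
    set r : Fin k → Fin n := fun t => ((S.toLeftᶜ.orderIsoOfFin hcompl) t : Fin n) with hr
    have hcinj : Function.Injective c :=
      Subtype.val_injective.comp (S.toRight.orderIsoOfFin rfl).injective
    have hrinj : Function.Injective r :=
      Subtype.val_injective.comp (S.toLeftᶜ.orderIsoOfFin hcompl).injective
    have hdet := hA k r c hrinj hcinj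
    rw [← Finset.toLeft_disjSum_toRight (u := S), Finset.sum_disjSum] at hg
    have key : ∀ i₀ : Fin n,
        (if Sum.inl i₀ ∈ S then g (Sum.inl i₀) else 0)
          + ∑ j ∈ S.toRight, g (Sum.inr j) * A i₀ j = 0 := by
      intro i₀
      have h1 := congrFun hg i₀
      simpa [Matrix.one_apply, mul_ite, mul_one, mul_zero, Finset.sum_ite_eq] using h1
    have hsum2 : ∀ f : Fin n → F, ∑ t : Fin k, f (c t) = ∑ j ∈ S.toRight, f j := by
      intro f
      rw [← Finset.sum_coe_sort S.toRight f]
      exact Fintype.sum_equiv (S.toRight.orderIsoOfFin rfl).toEquiv _ _ (fun t => rfl)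
    set x : Fin k → F := fun t => g (Sum.inr (c t)) with hxdef
    have hmv : (A.submatrix r c).mulVec x = 0 := by
      funext s
      have h3 : r s ∈ S.toLeftᶜ := ((S.toLeftᶜ).orderIsoOfFin hcompl s).2
      have hrs : Sum.inl (r s) ∉ S := fun hmem =>
        (Finset.mem_compl.mp h3) (Finset.mem_toLeft.mpr hmem)
      have hi := key (r s)
      rw [if_neg hrs, zero_add] at hi
      have h4 : ∑ t : Fin k, A (r s) (c t) * g (Sum.inr (c t)) = 0 := by
        rw [hsum2 (fun j => A (r s) j * g (Sum.inr j))]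
        rw [← hi]; exact Finset.sum_congr rfl (fun j _ => mul_comm _ _)
      simpa [Matrix.mulVec, dotProduct, Matrix.submatrix_apply, hxdef] using h4
    have hx0 : x = 0 := by
      by_contra hx
      exact hdet (Matrix.exists_mulVec_eq_zero_iff.mp ⟨x, hx, hmv⟩)
    have hg2 : ∀ j ∈ S.toRight, g (Sum.inr j) = 0 := by
      intro j hj
      have hcj : c ((S.toRight.orderIsoOfFin rfl).symm ⟨j, hj⟩) = j := by
        show ((S.toRight.orderIsoOfFin rfl)
          ((S.toRight.orderIsoOfFin rfl).symm ⟨j, hj⟩) : Fin n) = j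
        rw [OrderIso.apply_symm_apply]
      have h5 : g (Sum.inr (c ((S.toRight.orderIsoOfFin rfl).symm ⟨j, hj⟩))) = 0 :=
        congrFun hx0 _
      rwa [hcj] at h5
    have hg1 : ∀ i, Sum.inl i ∈ S → g (Sum.inl i) = 0 := by
      intro i hi
      have h6 := key i
      rw [if_pos hi, Finset.sum_eq_zero (fun j hj => by rw [hg2 j hj, zero_mul]),
        add_zero] at h6
      exact h6
    intro j hj
    rcases j with i | j
    · exact hg1 i hj
    · exact hg2 j (Finset.mem_toRight.mpr hj)
  · intro h k r c hrinj hcinj hdet0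
    have hk : k ≤ n := by
      simpa using Fintype.card_le_of_injective r hrinj
    obtain ⟨x, hx, hmv⟩ := Matrix.exists_mulVec_eq_zero_iff.mpr hdet0
    set T := ((Finset.univ.image r)ᶜ : Finset (Fin n)) with hT
    set S := T.disjSum (Finset.univ.image c) with hS
    have hcardS : S.card = n := by
      rw [hS, Finset.card_disjSum, hT, Finset.card_compl,
        Finset.card_image_of_injective _ hrinj, Finset.card_image_of_injective _ hcinj]
      simp; omega
    set y : Fin n → F := fun i => ∑ t : Fin k, A i (c t) * x t with hy
    have hyr : ∀ s : Fin k, y (r s) = 0 := by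
      intro s
      have := congrFun hmv s
      simpa [Matrix.mulVec, dotProduct, Matrix.submatrix_apply, hy] using this
    set g : Fin n ⊕ Fin n → F :=
      Sum.elim (fun i => -(y i)) (Function.extend c x 0) with hgdef
    have hsum : ∑ j ∈ S, g j •
        (Matrix.fromCols (1 : Matrix (Fin n) (Fin n) F) A).transpose j = 0 := by
      rw [hS, Finset.sum_disjSum]
      funext i₀
      have h2 : ∑ j ∈ Finset.univ.image c,
          Function.extend c x 0 j * A i₀ j = y i₀ := by
        rw [Finset.sum_image (fun t _ t' _ h => hcinj h)]
        exact Finset.sum_congr rfl (fun t _ => by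
          rw [hcinj.extend_apply, mul_comm])
      by_cases hi₀ : i₀ ∈ T
      · have hyi : y i₀ + -(y i₀) = 0 := by ring
        simpa [hgdef, Matrix.one_apply, mul_ite, mul_one, mul_zero,
          Finset.sum_ite_eq, hi₀, h2] using hyi
      · have hri : ∃ s, r s = i₀ := by
          have : i₀ ∈ Finset.univ.image r := by
            by_contra hcon
            exact hi₀ (Finset.mem_compl.mpr hcon)
          simpa using this
        obtain ⟨s, rfl⟩ := hri
        simpa [hgdef, Matrix.one_apply, mul_ite, mul_one, mul_zero,
          Finset.sum_ite_eq, hi₀, h2] using hyr s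
    obtain ⟨t₀, ht₀⟩ := Function.ne_iff.mp hx
    have hmem : Sum.inr (c t₀) ∈ S := by
      rw [hS, Finset.inr_mem_disjSum]
      exact Finset.mem_image_of_mem c (Finset.mem_univ t₀)
    have := (linIndep_finset_iff S _).mp (h S hcardS) g hsum (Sum.inr (c t₀)) hmem
    rw [hgdef] at this
    simp only [Sum.elim_inr] at this
    rw [hcinj.extend_apply] at this
    exact ht₀ (by simpa using this)

lemma isMDS_transpose {F : Type*} [Field F] {n : ℕ} (A : Matrix (Fin n) (Fin n) F) :
    IsMDS A.transpose ↔ IsMDS A := by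
  have key : ∀ B : Matrix (Fin n) (Fin n) F, IsMDS B → IsMDS B.transpose := by
    intro B hB k r c hr hc
    have := hB k c r hc hr
    rwa [show B.transpose.submatrix r c = (B.submatrix c r).transpose from rfl,
      Matrix.det_transpose]
  exact ⟨fun h => by simpa using key _ h, key A⟩

lemma linIndep_mul_iff {F : Type*} [Field F] {n : ℕ} {ι : Type*}
    (V : Matrix (Fin n) (Fin n) F) (hV : IsUnit V.det)
    (M : Matrix (Fin n) ι F) (S : Finset ι) :
    LinearIndependent F (fun j : S => (V * M).transpose j.1) ↔
      LinearIndependent F (fun j : S => M.transpose j.1) := by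
  have hinj : Function.Injective V.mulVecLin := by
    rw [Matrix.coe_mulVecLin]
    exact Matrix.mulVec_injective_iff_isUnit.mpr ((Matrix.isUnit_iff_isUnit_det V).mpr hV)
  have heq : (fun j : S => (V * M).transpose j.1)
      = V.mulVecLin ∘ (fun j : S => M.transpose j.1) := by
    funext j
    show (V * M).transpose j.1 = V.mulVec (M.transpose j.1)
    funext i
    simp [Matrix.mul_apply, Matrix.mulVec, dotProduct]
  rw [heq]
  exact LinearMap.linearIndependent_iff V.mulVecLin (LinearMap.ker_eq_bot.mpr hinj)

lemma root_rel {F : Type*} [Field F] {n : ℕ} (lam a : Fin n → F)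
    (hg : ∏ i : Fin n, (X - C (lam i)) =
      X ^ n + ∑ i : Fin n, C (a i) * X ^ (i : ℕ)) (kk : Fin n) :
    lam kk ^ n + ∑ i : Fin n, a i * lam kk ^ (i : ℕ) = 0 := by
  have h1 := congrArg (Polynomial.eval (lam kk)) hg
  have h2 : Polynomial.eval (lam kk) (∏ i : Fin n, (X - C (lam i))) = 0 := by
    rw [Polynomial.eval_prod]
    exact Finset.prod_eq_zero (Finset.mem_univ kk) (by simp)
  rw [h2] at h1
  simpa [Polynomial.eval_finset_sum] using h1.symm

lemma comp_V {F : Type*} [Field F] {n : ℕ} (lam a : Fin n → F)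
    (hg : ∏ i : Fin n, (X - C (lam i)) =
      X ^ n + ∑ i : Fin n, C (a i) * X ^ (i : ℕ)) :
    companion a * (Matrix.of fun i j : Fin n => lam i ^ (j : ℕ)).transpose
      = (Matrix.of fun i j : Fin n => lam i ^ (j : ℕ)).transpose * Matrix.diagonal lam := by
  ext i kk
  rw [Matrix.mul_diagonal]
  show ∑ j, companion a i j * lam kk ^ (j : ℕ) = lam kk ^ (i : ℕ) * lam kk
  rw [← pow_succ]
  by_cases hi : (i : ℕ) = n - 1
  · have hn : 0 < n := i.pos
    have hin : (i : ℕ) + 1 = n := by omega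
    rw [hin]
    have := root_rel lam a hg kk
    simp only [companion, Matrix.of_apply, hi, if_true, neg_mul]
    rw [Finset.sum_neg_distrib]
    linear_combination -this
  · have hin : (i : ℕ) + 1 < n := by omega
    rw [Finset.sum_eq_single (⟨(i : ℕ) + 1, hin⟩ : Fin n)]
    · simp [companion, hi]
    · intro j _ hj
      have : (j : ℕ) ≠ (i : ℕ) + 1 := fun h => hj (Fin.ext h)
      simp [companion, hi, this]
    · simp

/-- for `m ≥ n`, `C_g^m` is MDS iff every `n` columns of
`G' = [ (λ_i^j)_{j<n} | (λ_i^{m+j})_{j<n} ]` are linearly independent. -/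
theorem companion_pow_MDS_iff {F : Type*} [Field F] {n : ℕ}
    (lam a : Fin n → F) (hinj : Function.Injective lam)
    (hg : ∏ i : Fin n, (X - C (lam i)) =
        X ^ n + ∑ i : Fin n, C (a i) * X ^ (i : ℕ))
    (m : ℕ) (hm : n ≤ m) :
    IsMDS ((companion a) ^ m) ↔
      ∀ S : Finset (Fin n ⊕ Fin n), S.card = n →
        LinearIndependent F (fun j : S =>
          (Matrix.fromCols (Matrix.of fun i j : Fin n => lam i ^ (j : ℕ))
            (Matrix.of fun i j : Fin n => lam i ^ (m + (j : ℕ)))).transpose j.1) := by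
  set V := (Matrix.of fun i j : Fin n => lam i ^ (j : ℕ)) with hVdef
  have hVdet : IsUnit V.det := by
    have hv : V = Matrix.vandermonde lam := rfl
    rw [hv, Matrix.det_vandermonde]
    apply IsUnit.mk0
    apply Finset.prod_ne_zero_iff.mpr
    intro i _
    apply Finset.prod_ne_zero_iff.mpr
    intro j hj
    exact sub_ne_zero.mpr (fun h => absurd (hinj h).symm (Finset.mem_Ioi.mp hj).ne)
  have hCV : companion a * V.transpose = V.transpose * Matrix.diagonal lam :=
    comp_V lam a hg
  have hpow : (companion a) ^ m * V.transpose
      = V.transpose * (Matrix.diagonal lam) ^ m := by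
    clear hm
    induction m with
    | zero => simp
    | succ m ih => rw [pow_succ, pow_succ, mul_assoc, hCV, ← mul_assoc, ih, mul_assoc]
  set B := ((companion a) ^ m).transpose with hBdef
  have hVB : V * B = (Matrix.diagonal lam) ^ m * V := by
    have h7 := congrArg Matrix.transpose hpow
    rw [Matrix.transpose_mul, Matrix.transpose_mul, Matrix.transpose_transpose] at h7
    rw [hBdef, h7, Matrix.transpose_pow, Matrix.diagonal_transpose]
  have hG : V * Matrix.fromCols 1 B
      = Matrix.fromCols V (Matrix.of fun i j : Fin n => lam i ^ (m + (j : ℕ))) := by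
    have hD : (Matrix.diagonal lam) ^ m * V
        = (Matrix.of fun i j : Fin n => lam i ^ (m + (j : ℕ))) := by
      rw [Matrix.diagonal_pow]
      ext i j
      rw [Matrix.diagonal_mul]
      show lam i ^ m * lam i ^ (j : ℕ) = lam i ^ (m + (j : ℕ))
      rw [pow_add]
    rw [Matrix.mul_fromCols, mul_one, hVB, hD]
  rw [← isMDS_transpose ((companion a) ^ m), ← hBdef, mds_iff_cols B]
  refine forall₂_congr (fun S hS => ?_)
  rw [← hG]
  exact (linIndep_mul_iff V hVdet (Matrix.fromCols 1 B) S).symm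
end

section
/- Let F be a field, let g(x) be a monic polynomial of degree n over F with n distinct roots λ_1, …, λ_n ∈ F, and let m ≥ n be an integer. Let G' be the n×2n matrix whose i-th row is (1, λ_i, λ_i², …, λ_i^{n−1}, λ_i^m, λ_i^{m+1}, …, λ_i^{m+n−1}). Then C_g^m is an NMDS matrix if and only if G' satisfies the three conditions: (i) every n−1 columns of G' are linearly independent, (ii) some n columns of G' are linearly dependent, and (iii) every n+1 columns of G' span a space of dimension n. -/
open Polynomial

set_option maxHeartbeats 1000000
set_option synthInstance.maxHeartbeats 400000

namespace NMDSAux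

open Matrix Module Submodule

variable {F : Type*} [Field F] {n : ℕ}

noncomputable def rk (B : Matrix (Fin n) (Fin n ⊕ Fin n) F) (S : Finset (Fin n ⊕ Fin n)) : ℕ :=
  Module.finrank F (Submodule.span F (Bᵀ '' (S : Set (Fin n ⊕ Fin n))))

lemma rk_fromColumns_one (A : Matrix (Fin n) (Fin n) F) (T1 T2 : Finset (Fin n)) :
    rk (fromCols 1 A) (T1.disjSum T2) =
      T1.card + (A.submatrix ((↑) : {x // x ∈ T1ᶜ} → Fin n) ((↑) : {x // x ∈ T2} → Fin n)).rank := by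
  classical
  set B := fromCols (1 : Matrix (Fin n) (Fin n) F) A with hB
  set D := A.submatrix ((↑) : {x // x ∈ T1ᶜ} → Fin n) ((↑) : {x // x ∈ T2} → Fin n) with hD
  set π : (Fin n → F) →ₗ[F] ({x // x ∈ T1ᶜ} → F) :=
    LinearMap.funLeft F F ((↑) : {x // x ∈ T1ᶜ} → Fin n) with hπ
  set W : Submodule F (Fin n → F) :=
    Submodule.span F (Bᵀ '' ((T1.disjSum T2 : Finset (Fin n ⊕ Fin n)) : Set (Fin n ⊕ Fin n))) with hW
  have hcol1 : ∀ i : Fin n, Bᵀ (Sum.inl i) = Pi.single i 1 := by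
    intro i; funext r
    simp [hB, Matrix.transpose_apply, Matrix.one_apply, Pi.single_apply]
  have hcol2 : ∀ j : Fin n, π (Bᵀ (Sum.inr j)) = fun r : {x // x ∈ T1ᶜ} => A r j := by
    intro j; funext r; simp [hB, hπ, LinearMap.funLeft_apply]
  -- kernel of π
  have hker : LinearMap.ker π = Submodule.span F ((fun i => (Pi.single i 1 : Fin n → F)) '' ↑T1) := by
    apply le_antisymm
    · intro v hv
      have hv' : ∀ x : {x // x ∈ T1ᶜ}, v x = 0 := fun x => congrFun hv x
      have hrepr : v = ∑ i ∈ T1, v i • (Pi.single i 1 : Fin n → F) := by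
        funext x
        rw [Finset.sum_apply]
        by_cases hx : x ∈ T1
        · simp [Pi.single_apply, Finset.sum_ite_eq' T1 x, hx]
        · have h0 : v x = 0 := hv' ⟨x, Finset.mem_compl.mpr hx⟩
          simp [Pi.single_apply, Finset.sum_ite_eq' T1 x, hx, h0]
      rw [hrepr]
      exact Submodule.sum_mem _ fun i hi =>
        Submodule.smul_mem _ _ (Submodule.subset_span ⟨i, by simpa using hi, rfl⟩)
    · rw [Submodule.span_le]
      rintro _ ⟨i, hi, rfl⟩
      simp only [SetLike.mem_coe, LinearMap.mem_ker]
      funext x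
      have hxi : (x : Fin n) ≠ i := by
        rintro rfl
        exact (Finset.mem_compl.mp x.2) (by simpa using hi)
      simp [hπ, LinearMap.funLeft_apply, Pi.single_eq_of_ne hxi]
  have hkerW : LinearMap.ker π ≤ W := by
    rw [hker, Submodule.span_le]
    rintro _ ⟨i, hi, rfl⟩
    have hmem : Bᵀ (Sum.inl i) ∈ W :=
      Submodule.subset_span ⟨Sum.inl i, by simpa using hi, rfl⟩
    simpa [hcol1 i] using hmem
  have hfr_ker : finrank F (LinearMap.ker π) = T1.card := by
    have hsurj : Function.Surjective π :=
      LinearMap.funLeft_surjective_of_injective F F _ Subtype.val_injective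
    have h1 := LinearMap.finrank_range_add_finrank_ker π
    rw [LinearMap.range_eq_top.mpr hsurj] at h1
    have h2 : finrank F (⊤ : Submodule F ({x // x ∈ T1ᶜ} → F)) = T1ᶜ.card := by
      rw [finrank_top, Module.finrank_pi, Fintype.card_coe]
    have h3 : finrank F (Fin n → F) = n := by
      rw [Module.finrank_pi, Fintype.card_fin]
    have h4 : T1ᶜ.card = n - T1.card := by
      rw [Finset.card_compl, Fintype.card_fin]
    have h5 : T1.card ≤ n := by
      simpa using Finset.card_le_univ T1
    omega
  -- rank-nullity on π restricted to W
  have hmain := LinearMap.finrank_range_add_finrank_ker (π.comp W.subtype)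
  have hrange : LinearMap.range (π.comp W.subtype) = Submodule.span F (Set.range Dᵀ) := by
    have hS : ((T1.disjSum T2 : Finset (Fin n ⊕ Fin n)) : Set (Fin n ⊕ Fin n)) =
        Sum.inl '' ↑T1 ∪ Sum.inr '' ↑T2 := by
      ext x; cases x <;> simp
    have hz : Submodule.span F (⇑π '' (Bᵀ '' (Sum.inl '' (↑T1 : Set (Fin n))))) = ⊥ := by
      rw [Submodule.span_eq_bot]
      rintro _ ⟨_, ⟨_, ⟨i, hi, rfl⟩, rfl⟩, rfl⟩
      rw [hcol1 i]
      funext x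
      have hxi : (x : Fin n) ≠ i := by
        rintro rfl
        exact (Finset.mem_compl.mp x.2) (by simpa using hi)
      simp [hπ, LinearMap.funLeft_apply, Pi.single_eq_of_ne hxi]
    have he : ⇑π '' (Bᵀ '' (Sum.inr '' (↑T2 : Set (Fin n)))) = Set.range Dᵀ := by
      ext v; constructor
      · rintro ⟨_, ⟨_, ⟨j, hj, rfl⟩, rfl⟩, rfl⟩
        exact ⟨⟨j, hj⟩, by rw [hcol2 j]; rfl⟩
      · rintro ⟨⟨j, hj⟩, rfl⟩
        exact ⟨Bᵀ (Sum.inr j), ⟨_, ⟨j, hj, rfl⟩, rfl⟩, by rw [hcol2 j]; rfl⟩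
    have hU : Bᵀ '' (Sum.inl '' (↑T1 : Set (Fin n)) ∪ Sum.inr '' (↑T2 : Set (Fin n)))
        = Bᵀ '' (Sum.inl '' (↑T1 : Set (Fin n))) ∪ Bᵀ '' (Sum.inr '' (↑T2 : Set (Fin n))) :=
      Set.image_union _ _ _
    rw [LinearMap.range_comp, Submodule.range_subtype, hW, Submodule.map_span, hS,
      hU, Set.image_union, Submodule.span_union, hz, he, bot_sup_eq]
  have hkerf : finrank F (LinearMap.ker (π.comp W.subtype)) = T1.card := by
    rw [LinearMap.ker_comp]
    rw [(Submodule.comapSubtypeEquivOfLe hkerW).finrank_eq, hfr_ker]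
  have hrk : finrank F (LinearMap.range (π.comp W.subtype)) = D.rank := by
    rw [hrange]; exact (Matrix.rank_eq_finrank_span_cols D).symm
  have hfin : rk (fromCols 1 A) (T1.disjSum T2) = finrank F W := rfl
  rw [hfin, ← hmain, hkerf, hrk, add_comm]

lemma rk_transpose_rel (A : Matrix (Fin n) (Fin n) F) (S : Finset (Fin n ⊕ Fin n)) :
    rk (fromCols 1 Aᵀ) ((S.toRightᶜ).disjSum (S.toLeftᶜ)) + S.card
      = rk (fromCols 1 A) S + n := by
  classical
  have hStoRL : S = S.toLeft.disjSum S.toRight := (Finset.toLeft_disjSum_toRight (u := S)).symm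
  have hcardS : S.card = S.toLeft.card + S.toRight.card := by
    conv_lhs => rw [hStoRL]
    rw [Finset.card_disjSum]
  rw [rk_fromColumns_one]
  conv_rhs => rw [hStoRL]
  rw [rk_fromColumns_one]
  have hsub : (Aᵀ.submatrix ((↑) : {x // x ∈ S.toRightᶜᶜ} → Fin n)
        ((↑) : {x // x ∈ S.toLeftᶜ} → Fin n)).rank
      = (A.submatrix ((↑) : {x // x ∈ S.toLeftᶜ} → Fin n)
        ((↑) : {x // x ∈ S.toRightᶜᶜ} → Fin n)).rank := by
    rw [← Matrix.transpose_submatrix, Matrix.rank_transpose]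
  rw [hsub]
  have hc2 : S.toRightᶜᶜ = S.toRight := by rw [compl_compl]
  rw [hc2]
  have h1 : S.toLeft.card ≤ n := by simpa using Finset.card_le_univ S.toLeft
  have h2 : S.toRight.card ≤ n := by simpa using Finset.card_le_univ S.toRight
  have h3 : S.toRightᶜ.card = n - S.toRight.card := by
    rw [Finset.card_compl, Fintype.card_fin]
  omega

lemma li_iff' (B : Matrix (Fin n) (Fin n ⊕ Fin n) F) (S : Finset (Fin n ⊕ Fin n)) :
    LinearIndependent F (fun j : S => Bᵀ j.1) ↔ S.card = rk B S := by
  rw [linearIndependent_iff_card_eq_finrank_span, Set.finrank]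
  have h1 : Set.range (fun j : S => Bᵀ j.1) = Bᵀ '' (S : Set (Fin n ⊕ Fin n)) := by
    ext v; simp only [Set.mem_range, Set.mem_image, Subtype.exists, Finset.mem_coe, exists_prop]; exact Iff.rfl
  rw [h1, Fintype.card_coe, rk]

def Conds (B : Matrix (Fin n) (Fin n ⊕ Fin n) F) : Prop :=
  (∀ S : Finset (Fin n ⊕ Fin n), S.card = n - 1 →
      LinearIndependent F (fun j : S => Bᵀ j.1)) ∧
  (∃ S : Finset (Fin n ⊕ Fin n), S.card = n ∧
      ¬ LinearIndependent F (fun j : S => Bᵀ j.1)) ∧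
  (∀ S : Finset (Fin n ⊕ Fin n), S.card = n + 1 →
      Module.finrank F (Submodule.span F
        ((fun j => Bᵀ j) '' (S : Set (Fin n ⊕ Fin n)))) = n)

lemma conds_finrank_eq_rk (B : Matrix (Fin n) (Fin n ⊕ Fin n) F) (S : Finset (Fin n ⊕ Fin n)) :
    Module.finrank F (Submodule.span F
        ((fun j => Bᵀ j) '' (S : Set (Fin n ⊕ Fin n)))) = rk B S := rfl

lemma conds_transpose_mp (A : Matrix (Fin n) (Fin n) F)
    (h : Conds (fromCols 1 A)) : Conds (fromCols 1 Aᵀ) := by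
  classical
  obtain ⟨h1, ⟨S0, hS0c, hS0⟩, h3⟩ := h
  -- n ≥ 1
  have hn : 1 ≤ n := by
    by_contra hn
    have : n = 0 := by omega
    subst this
    haveI : IsEmpty (Fin 0 ⊕ Fin 0) := by infer_instance
    exact hS0 linearIndependent_empty_type
  -- star operation
  set star : Finset (Fin n ⊕ Fin n) → Finset (Fin n ⊕ Fin n) :=
    fun S => (S.toRightᶜ).disjSum (S.toLeftᶜ) with hstar
  have hstar_card : ∀ S : Finset (Fin n ⊕ Fin n), S.card ≤ 2 * n →
      (star S).card = 2 * n - S.card := by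
    intro S hS
    have hcardS : S.card = S.toLeft.card + S.toRight.card := by
      conv_lhs => rw [← Finset.toLeft_disjSum_toRight (u := S)]
      rw [Finset.card_disjSum]
    have h1' : S.toLeft.card ≤ n := by simpa using Finset.card_le_univ S.toLeft
    have h2' : S.toRight.card ≤ n := by simpa using Finset.card_le_univ S.toRight
    rw [hstar]
    simp only [Finset.card_disjSum, Finset.card_compl, Fintype.card_fin]
    omega
  have hstar_star : ∀ S : Finset (Fin n ⊕ Fin n),
      (star S).toRightᶜ.disjSum (star S).toLeftᶜ = S := by
    intro S
    rw [hstar]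
    simp only [Finset.toLeft_disjSum, Finset.toRight_disjSum, compl_compl]
    exact Finset.toLeft_disjSum_toRight
  have hrel : ∀ S : Finset (Fin n ⊕ Fin n),
      rk (fromCols 1 Aᵀ) ((star S).toRightᶜ.disjSum (star S).toLeftᶜ) + (star S).card
        = rk (fromCols 1 A) (star S) + n := fun S => rk_transpose_rel A (star S)
  have hrel0 : ∀ S : Finset (Fin n ⊕ Fin n),
      rk (fromCols 1 Aᵀ) (star S) + S.card = rk (fromCols 1 A) S + n :=
    fun S => rk_transpose_rel A S
  have hcard_le : ∀ S : Finset (Fin n ⊕ Fin n), S.card ≤ 2 * n := by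
    intro S
    have := Finset.card_le_univ S
    simp only [Fintype.card_sum, Fintype.card_fin] at this
    omega
  refine ⟨?_, ?_, ?_⟩
  · -- (i) for Aᵀ from (iii) for A
    intro S hS
    rw [li_iff', hS]
    have hc : (star S).card = n + 1 := by rw [hstar_card S (hcard_le S)]; omega
    have h3' := h3 (star S) hc
    rw [conds_finrank_eq_rk] at h3'
    have := hrel S
    rw [hstar_star S] at this
    omega
  · -- (ii)
    refine ⟨star S0, by rw [hstar_card S0 (hcard_le S0)]; omega, ?_⟩
    rw [li_iff'] at hS0 ⊢
    have := hrel0 S0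
    have hc : (star S0).card = n := by rw [hstar_card S0 (hcard_le S0)]; omega
    rw [hc]
    omega
  · -- (iii) for Aᵀ from (i) for A
    intro S hS
    rw [conds_finrank_eq_rk]
    have hc : (star S).card = n - 1 := by rw [hstar_card S (hcard_le S)]; omega
    have h1' := h1 (star S) hc
    rw [li_iff', hc] at h1'
    have := hrel S
    rw [hstar_star S] at this
    omega

lemma conds_transpose (A : Matrix (Fin n) (Fin n) F) :
    Conds (fromCols 1 A) ↔ Conds (fromCols 1 Aᵀ) :=
  ⟨conds_transpose_mp A, fun h => by simpa using conds_transpose_mp Aᵀ h⟩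

lemma conds_mul (V : Matrix (Fin n) (Fin n) F) (hV : IsUnit V.det)
    (B : Matrix (Fin n) (Fin n ⊕ Fin n) F) : Conds (V * B) ↔ Conds B := by
  classical
  haveI : Invertible V := V.invertibleOfIsUnitDet hV
  set e : (Fin n → F) ≃ₗ[F] (Fin n → F) := V.toLinearEquiv' ‹Invertible V› with he
  have hcol : ∀ j, (V * B)ᵀ j = e (Bᵀ j) := by
    intro j; funext i
    show (V * B) i j = Matrix.toLin' V (Bᵀ j) i
    rw [Matrix.toLin'_apply]
    simp [Matrix.mul_apply, Matrix.mulVec, dotProduct]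
  have hLI : ∀ S : Finset (Fin n ⊕ Fin n),
      (LinearIndependent F (fun j : S => (V * B)ᵀ j.1) ↔
        LinearIndependent F (fun j : S => Bᵀ j.1)) := by
    intro S
    have h1 : (fun j : S => (V * B)ᵀ j.1) = ⇑e.toLinearMap ∘ (fun j : S => Bᵀ j.1) := by
      funext j; simp [hcol]
    rw [h1]
    exact e.toLinearMap.linearIndependent_iff (LinearMap.ker_eq_bot.mpr e.injective)
  have hFR : ∀ S : Finset (Fin n ⊕ Fin n),
      Module.finrank F (Submodule.span F
          ((fun j => (V * B)ᵀ j) '' (S : Set (Fin n ⊕ Fin n))))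
        = Module.finrank F (Submodule.span F
          ((fun j => Bᵀ j) '' (S : Set (Fin n ⊕ Fin n)))) := by
    intro S
    have h1 : (fun j => (V * B)ᵀ j) '' (S : Set (Fin n ⊕ Fin n))
        = ⇑e '' ((fun j => Bᵀ j) '' (S : Set (Fin n ⊕ Fin n))) := by
      rw [← Set.image_comp]
      apply congrArg (· '' (S : Set (Fin n ⊕ Fin n)))
      funext j; simp [hcol]
    have h2 : Submodule.span F (⇑e '' ((fun j => Bᵀ j) '' (S : Set (Fin n ⊕ Fin n))))
        = Submodule.map (e : (Fin n → F) →ₗ[F] (Fin n → F))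
            (Submodule.span F ((fun j => Bᵀ j) '' (S : Set (Fin n ⊕ Fin n)))) := by
      exact Submodule.span_image (e : (Fin n → F) →ₗ[F] (Fin n → F))
    rw [h1, h2, LinearEquiv.finrank_map_eq]
  constructor <;> rintro ⟨c1, ⟨S0, hS0c, hS0⟩, c3⟩
  · exact ⟨fun S hS => (hLI S).mp (c1 S hS), ⟨S0, hS0c, fun h => hS0 ((hLI S0).mpr h)⟩,
      fun S hS => by rw [← hFR S]; exact c3 S hS⟩
  · exact ⟨fun S hS => (hLI S).mpr (c1 S hS), ⟨S0, hS0c, fun h => hS0 ((hLI S0).mp h)⟩,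
      fun S hS => by rw [hFR S]; exact c3 S hS⟩

end NMDSAux


open Matrix in

/-- for `m ≥ n`, `C_g^m` is NMDS iff
`G' = [ (λ_i^j)_{j<n} | (λ_i^{m+j})_{j<n} ]` satisfies: (i) every `n-1` columns are
linearly independent, (ii) some `n` columns are linearly dependent, and (iii) every
`n+1` columns span a space of dimension `n`. -/

theorem companion_pow_NMDS_iff {F : Type*} [Field F] {n : ℕ}
    (lam a : Fin n → F) (hinj : Function.Injective lam)
    (hg : ∏ i : Fin n, (X - C (lam i)) =
        X ^ n + ∑ i : Fin n, C (a i) * X ^ (i : ℕ))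
    (m : ℕ) (hm : n ≤ m) :
    IsNMDSMatrix ((companion a) ^ m) ↔
      ((∀ S : Finset (Fin n ⊕ Fin n), S.card = n - 1 →
          LinearIndependent F (fun j : S =>
            (Matrix.fromCols (Matrix.of fun i j : Fin n => lam i ^ (j : ℕ))
              (Matrix.of fun i j : Fin n => lam i ^ (m + (j : ℕ)))).transpose j.1)) ∧
       (∃ S : Finset (Fin n ⊕ Fin n), S.card = n ∧
          ¬ LinearIndependent F (fun j : S =>
            (Matrix.fromCols (Matrix.of fun i j : Fin n => lam i ^ (j : ℕ))
              (Matrix.of fun i j : Fin n => lam i ^ (m + (j : ℕ)))).transpose j.1)) ∧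
       (∀ S : Finset (Fin n ⊕ Fin n), S.card = n + 1 →
          Module.finrank F (Submodule.span F
            ((fun j => (Matrix.fromCols (Matrix.of fun i j : Fin n => lam i ^ (j : ℕ))
              (Matrix.of fun i j : Fin n => lam i ^ (m + (j : ℕ)))).transpose j) ''
                (S : Set (Fin n ⊕ Fin n)))) = n)) := by
  classical
  set V : Matrix (Fin n) (Fin n) F := Matrix.of fun i j : Fin n => lam i ^ (j : ℕ) with hVdef
  have hVdet : IsUnit V.det := by
    have hV : V = Matrix.vandermonde lam := rfl
    rw [hV, Matrix.det_vandermonde, isUnit_iff_ne_zero]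
    rw [Finset.prod_ne_zero_iff]
    intro i _
    rw [Finset.prod_ne_zero_iff]
    intro j hj
    rw [Finset.mem_Ioi] at hj
    exact sub_ne_zero.mpr (hinj.ne (ne_of_gt hj))
  have hroot : ∀ i, lam i ^ n + ∑ j : Fin n, a j * lam i ^ (j : ℕ) = 0 := by
    intro i
    have h0 := congrArg (Polynomial.eval (lam i)) hg
    rw [Polynomial.eval_prod] at h0
    rw [Finset.prod_eq_zero (Finset.mem_univ i) (by simp)] at h0
    simp only [Polynomial.eval_add, Polynomial.eval_pow, Polynomial.eval_X,
      Polynomial.eval_finset_sum, Polynomial.eval_mul, Polynomial.eval_C] at h0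
    exact h0.symm
  have hVC : V * (companion a)ᵀ = Matrix.diagonal lam * V := by
    ext i k
    rw [Matrix.mul_apply]
    have hRHS : (Matrix.diagonal lam * V) i k = lam i ^ ((k : ℕ) + 1) := by
      rw [Matrix.diagonal_mul, hVdef]
      simp [pow_succ, mul_comm]
    rw [hRHS]
    by_cases hk : (k : ℕ) = n - 1
    · have hn1 : (k : ℕ) + 1 = n := by have := k.isLt; omega
      have : ∀ j : Fin n, V i j * (companion a)ᵀ j k = lam i ^ (j : ℕ) * (-a j) := by
        intro j
        simp [companion, Matrix.transpose_apply, hk, hVdef]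
      rw [Finset.sum_congr rfl (fun j _ => this j)]
      have := hroot i
      rw [hn1]
      have hsum : ∑ j : Fin n, lam i ^ (j : ℕ) * (-a j)
          = -∑ j : Fin n, a j * lam i ^ (j : ℕ) := by
        rw [← Finset.sum_neg_distrib]
        exact Finset.sum_congr rfl (fun j _ => by ring)
      rw [hsum]
      linear_combination -this
    · have hk1 : (k : ℕ) + 1 < n := by have := k.isLt; omega
      set j0 : Fin n := ⟨(k : ℕ) + 1, hk1⟩ with hj0
      have : ∀ j : Fin n, V i j * (companion a)ᵀ j k
          = if j = j0 then lam i ^ (j : ℕ) else 0 := by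
        intro j
        simp only [companion, Matrix.transpose_apply, Matrix.of_apply, hk, if_false, hVdef]
        by_cases hj : j = j0
        · subst hj; simp [hj0]
        · have : ¬ ((j : ℕ) = (k : ℕ) + 1) := by
            intro hEq; exact hj (Fin.ext hEq)
          simp [this, hj]
      rw [Finset.sum_congr rfl (fun j _ => this j)]
      rw [Finset.sum_ite_eq' Finset.univ j0]
      simp [hj0]
  have hVCm : ∀ k : ℕ, V * ((companion a)ᵀ) ^ k = Matrix.diagonal (fun i => lam i ^ k) * V := by
    intro k
    induction k with
    | zero => simp [Matrix.diagonal_one]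
    | succ k ih =>
      rw [pow_succ, ← Matrix.mul_assoc, ih, Matrix.mul_assoc, hVC, ← Matrix.mul_assoc,
        Matrix.diagonal_mul_diagonal]
      have hfun : (fun i => lam i ^ k * lam i) = fun i => lam i ^ (k + 1) :=
        funext fun i => (pow_succ _ _).symm
      rw [hfun]
  have hG : Matrix.fromCols (Matrix.of fun i j : Fin n => lam i ^ (j : ℕ))
        (Matrix.of fun i j : Fin n => lam i ^ (m + (j : ℕ)))
      = V * Matrix.fromCols 1 (((companion a) ^ m)ᵀ) := by
    rw [Matrix.mul_fromCols, Matrix.mul_one, Matrix.transpose_pow, hVCm m]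
    ext i j
    cases j with
    | inl j => simp [hVdef]
    | inr j => simp [Matrix.diagonal_mul, hVdef, pow_add]
  have h1 : IsNMDSMatrix ((companion a) ^ m) ↔
      NMDSAux.Conds (Matrix.fromCols 1 ((companion a) ^ m)) := Iff.rfl
  rw [h1, NMDSAux.conds_transpose, ← NMDSAux.conds_mul V hVdet, ← hG]
  exact Iff.rfl
end

section
/- Let F_q be a finite field, let g(x) = ∏_{i=1}^n (x − λ_i) be a monic polynomial over F_q, let c ∈ F_q be nonzero, and let g*(x) = c^n g(x/c) = ∏_{i=1}^n (x − c λ_i). Then for every positive integer m: C_g^m is an MDS matrix if and only if C_{g*}^m is an MDS matrix, and C_g^m is an NMDS matrix if and only if C_{g*}^m is an NMDS matrix. -/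
open Polynomial

lemma coeff_of_form {F : Type*} [Field F] {n : ℕ} (f : Fin n → F) (j : Fin n) :
    (X ^ n + ∑ i : Fin n, C (f i) * X ^ (i : ℕ)).coeff (j : ℕ) = f j := by
  rw [coeff_add, coeff_X_pow, if_neg (Nat.ne_of_lt j.isLt), finset_sum_coeff]
  simp only [coeff_C_mul, coeff_X_pow]
  rw [Finset.sum_eq_single j]
  · simp
  · intro i _ hij
    rw [if_neg (fun h => hij (Fin.ext h.symm)), mul_zero]
  · simp

lemma scaleRoots_X_sub_C {F : Type*} [Field F] (c l : F) :
    (X - C l).scaleRoots c = X - C (c * l) := by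
  ext k
  rw [coeff_scaleRoots, natDegree_X_sub_C]
  rcases k with _ | _ | k <;> simp [coeff_X, mul_comm]

lemma scaleRoots_prod {F : Type*} [Field F] {n : ℕ} (lam : Fin n → F) (c : F) :
    (∏ i : Fin n, (X - C (lam i))).scaleRoots c = ∏ i : Fin n, (X - C (c * lam i)) := by
  let φ : F[X] →* F[X] :=
    { toFun := fun p => p.scaleRoots c
      map_one' := one_scaleRoots c
      map_mul' := fun p q => mul_scaleRoots_of_noZeroDivisors p q c }
  have : (∏ i : Fin n, (X - C (lam i))).scaleRoots c = ∏ i : Fin n, ((X - C (lam i)).scaleRoots c) :=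
    map_prod φ _ _
  rw [this]
  exact Finset.prod_congr rfl fun i _ => scaleRoots_X_sub_C c (lam i)

lemma b_eq {F : Type*} [Field F] {n : ℕ} (lam : Fin n → F) (c : F) (a b : Fin n → F)
    (hg : ∏ i : Fin n, (X - C (lam i)) = X ^ n + ∑ i : Fin n, C (a i) * X ^ (i : ℕ))
    (hgstar : ∏ i : Fin n, (X - C (c * lam i)) = X ^ n + ∑ i : Fin n, C (b i) * X ^ (i : ℕ))
    (j : Fin n) : b j = c ^ (n - (j : ℕ)) * a j := by
  have hdeg : (∏ i : Fin n, (X - C (lam i))).natDegree = n := by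
    rw [natDegree_prod _ _ (fun i _ => X_sub_C_ne_zero _)]
    simp [natDegree_X_sub_C]
  have h1 : b j = (∏ i : Fin n, (X - C (c * lam i))).coeff (j : ℕ) := by
    rw [hgstar, coeff_of_form]
  rw [h1, ← scaleRoots_prod, coeff_scaleRoots, hdeg, hg, coeff_of_form, mul_comm]


lemma companion_entry {F : Type*} [Field F] {n : ℕ} (a b : Fin n → F) (c : F) (hc : c ≠ 0)
    (hab : ∀ j : Fin n, b j = c ^ (n - (j : ℕ)) * a j) (i j : Fin n) :
    companion b i j = (c * c ^ (i : ℕ)) * companion a i j * (c ^ (j : ℕ))⁻¹ := by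
  have hn : 1 ≤ n := i.pos
  unfold companion
  simp only [Matrix.of_apply]
  split_ifs with h1 h2
  · rw [hab j]
    have hpow : c * c ^ (i : ℕ) * (c ^ (j : ℕ))⁻¹ = c ^ (n - (j : ℕ)) := by
      have h1' : c * c ^ (i : ℕ) = c ^ n := by
        rw [← pow_succ']; congr 1; omega
      rw [h1']
      exact (pow_sub₀ c hc j.isLt.le).symm
    rw [← hpow]; ring
  · have hpow : c * c ^ (i : ℕ) * (c ^ (j : ℕ))⁻¹ = 1 := by
      rw [h2, pow_succ']
      exact mul_inv_cancel₀ (mul_ne_zero hc (pow_ne_zero _ hc))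
    rw [mul_one]; exact hpow.symm
  · ring

lemma pow_entry {F : Type*} [Field F] {n : ℕ} (A B : Matrix (Fin n) (Fin n) F) (c : F)
    (hc : c ≠ 0) (hAB : ∀ i j, B i j = (c * c ^ (i : ℕ)) * A i j * (c ^ (j : ℕ))⁻¹) (m : ℕ) :
    ∀ i j, (B ^ m) i j = (c ^ m * c ^ (i : ℕ)) * (A ^ m) i j * (c ^ (j : ℕ))⁻¹ := by
  induction m with
  | zero =>
    intro i j
    simp only [pow_zero, Matrix.one_apply]
    split_ifs with h
    · subst h; rw [mul_one, one_mul, mul_inv_cancel₀ (pow_ne_zero _ hc)]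
    · ring
  | succ m ih =>
    intro i j
    rw [pow_succ B, pow_succ A, Matrix.mul_apply, Matrix.mul_apply, Finset.mul_sum,
      Finset.sum_mul]
    apply Finset.sum_congr rfl
    intro k _
    rw [ih, hAB]
    field_simp
    ring


lemma scale_MDS {F : Type*} [Field F] {n : ℕ} (A B : Matrix (Fin n) (Fin n) F)
    (s t : Fin n → F) (hs : ∀ i, s i ≠ 0) (ht : ∀ j, t j ≠ 0)
    (hB : ∀ i j, B i j = s i * A i j * t j) (hA : IsMDS A) : IsMDS B := by
  intro k r cc hr hcc
  have hsub : B.submatrix r cc =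
      Matrix.diagonal (fun i => s (r i)) * A.submatrix r cc *
        Matrix.diagonal (fun j => t (cc j)) := by
    ext i j
    rw [Matrix.mul_diagonal, Matrix.diagonal_mul, Matrix.submatrix_apply,
      Matrix.submatrix_apply, hB]
  rw [hsub, Matrix.det_mul, Matrix.det_mul, Matrix.det_diagonal, Matrix.det_diagonal]
  exact mul_ne_zero (mul_ne_zero (Finset.prod_ne_zero_iff.2 fun i _ => hs _) (hA k r cc hr hcc))
    (Finset.prod_ne_zero_iff.2 fun j _ => ht _)


lemma li_units_smul_iff {F : Type*} [Field F] {M : Type*} [AddCommGroup M] [Module F M]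
    {ι : Type*} (v : ι → M) (w : ι → Fˣ) :
    LinearIndependent F (fun i => w i • v i) ↔ LinearIndependent F v := by
  constructor
  · intro h
    have h2 := h.units_smul w⁻¹
    have h3 : (w⁻¹ • fun i => w i • v i) = v := by
      funext i; simp [Pi.smul_apply]
    rwa [h3] at h2
  · intro h
    exact h.units_smul w

lemma li_equiv_comp_iff {F : Type*} [Field F] {M M' : Type*} [AddCommGroup M] [Module F M]
    [AddCommGroup M'] [Module F M'] {ι : Type*} (v : ι → M) (e : M ≃ₗ[F] M') :
    LinearIndependent F (fun i => e (v i)) ↔ LinearIndependent F v := by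
  constructor
  · intro h
    have h2 := h.map' e.symm.toLinearMap e.symm.ker
    have h3 : (⇑e.symm.toLinearMap ∘ fun i => e (v i)) = v := by
      funext i; simp
    rwa [h3] at h2
  · intro h
    exact h.map' e.toLinearMap e.ker

lemma scale_NMDS {F : Type*} [Field F] {n : ℕ} (A B : Matrix (Fin n) (Fin n) F)
    (s t : Fin n → F) (hs : ∀ i, s i ≠ 0) (ht : ∀ j, t j ≠ 0)
    (hB : ∀ i j, B i j = s i * A i j * t j) (hA : IsNMDSMatrix A) : IsNMDSMatrix B := by
  classical
  set colA : Fin n ⊕ Fin n → (Fin n → F) :=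
    fun j => (Matrix.fromCols (1 : Matrix (Fin n) (Fin n) F) A).transpose j with hcolA
  set colB : Fin n ⊕ Fin n → (Fin n → F) :=
    fun j => (Matrix.fromCols (1 : Matrix (Fin n) (Fin n) F) B).transpose j with hcolB
  set e : (Fin n → F) ≃ₗ[F] (Fin n → F) :=
    LinearEquiv.piCongrRight (fun i => LinearEquiv.smulOfNeZero F F (s i) (hs i)) with he
  set u : Fin n ⊕ Fin n → Fˣ :=
    Sum.elim (fun k => Units.mk0 (s k)⁻¹ (inv_ne_zero (hs k))) (fun k => Units.mk0 (t k) (ht k))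
    with hu
  have key : ∀ j, colB j = (u j : F) • e (colA j) := by
    rintro (k | k) <;> funext i <;>
      simp only [hcolB, hcolA, he, hu, Matrix.transpose_apply, Matrix.fromCols_apply_inl,
        Matrix.fromCols_apply_inr, Sum.elim_inl, Sum.elim_inr, Pi.smul_apply,
        LinearEquiv.piCongrRight_apply, LinearEquiv.smulOfNeZero_apply]
    · simp only [Units.smul_def, Units.val_mk0, smul_eq_mul, Matrix.one_apply]
      split_ifs with h
      · subst h; rw [mul_one, inv_mul_cancel₀ (hs i)]
      · ring
    · simp only [Units.smul_def, Units.val_mk0, smul_eq_mul, hB]; ring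
  have keyS : ∀ j, colB j = e ((u j : F) • colA j) := by
    intro j; rw [key j, map_smul]
  -- linear independence transfer
  have li_iff : ∀ (S : Finset (Fin n ⊕ Fin n)),
      (LinearIndependent F (fun j : S => colB j.1) ↔
        LinearIndependent F (fun j : S => colA j.1)) := by
    intro S
    have h1 : (fun j : S => colB j.1) = fun j : S => e ((u j.1 : F) • colA j.1) := by
      funext j; exact keyS j.1
    rw [h1, li_equiv_comp_iff (fun j : S => (u j.1 : F) • colA j.1) e]
    have h2 : (fun j : S => (u j.1 : F) • colA j.1) =
        fun j : S => (fun (j : S) => u j.1) j • (fun (j : S) => colA j.1) j := rfl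
    rw [h2, li_units_smul_iff (fun j : S => colA j.1) (fun j : S => u j.1)]
  -- span transfer
  have span_eq : ∀ (S : Finset (Fin n ⊕ Fin n)),
      Submodule.span F (colB '' (S : Set (Fin n ⊕ Fin n))) =
        (Submodule.span F (colA '' (S : Set (Fin n ⊕ Fin n)))).map
          (e : (Fin n → F) →ₗ[F] (Fin n → F)) := by
    intro S
    rw [Submodule.map_span]
    apply Submodule.span_eq_span
    · rintro x ⟨j, hj, rfl⟩
      have : e (colA j) ∈ Submodule.span F (⇑e '' (colA '' (S : Set (Fin n ⊕ Fin n)))) :=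
        Submodule.subset_span ⟨colA j, ⟨j, hj, rfl⟩, rfl⟩
      rw [key j]
      exact Submodule.smul_mem _ _ this
    · rintro x ⟨y, ⟨j, hj, rfl⟩, rfl⟩
      have hmem : colB j ∈ Submodule.span F (colB '' (S : Set (Fin n ⊕ Fin n))) :=
        Submodule.subset_span ⟨j, hj, rfl⟩
      have heq : (u j)⁻¹ • colB j = e (colA j) := by
        rw [key j]; exact inv_smul_smul _ _
      show e (colA j) ∈ Submodule.span F (colB '' (S : Set (Fin n ⊕ Fin n)))
      rw [← heq]
      exact Submodule.smul_mem _ _ hmem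
  obtain ⟨h1, h2, h3⟩ := hA
  refine ⟨fun S hS => (li_iff S).2 (h1 S hS), ?_, fun S hS => ?_⟩
  · obtain ⟨S, hS, hnl⟩ := h2
    exact ⟨S, hS, fun hl => hnl ((li_iff S).1 hl)⟩
  · rw [show ((fun j => (Matrix.fromCols (1 : Matrix (Fin n) (Fin n) F) B).transpose j) ''
        (S : Set (Fin n ⊕ Fin n))) = colB '' (S : Set (Fin n ⊕ Fin n)) from rfl,
      span_eq S, LinearEquiv.finrank_map_eq]
    exact h3 S hS


/-- if `g(x) = ∏ (x - λ_i)` and `g*(x) = cⁿ g(x/c) = ∏ (x - c λ_i)` for a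
nonzero `c`, then for every positive integer `m`, `C_g^m` is MDS (resp. NMDS) iff
`C_{g*}^m` is MDS (resp. NMDS). -/
theorem companion_pow_MDS_NMDS_scale {F : Type*} [Field F] [Fintype F] {n : ℕ}
    (lam : Fin n → F) (c : F) (hc : c ≠ 0) (a b : Fin n → F)
    (hg : ∏ i : Fin n, (X - C (lam i)) =
        X ^ n + ∑ i : Fin n, C (a i) * X ^ (i : ℕ))
    (hgstar : ∏ i : Fin n, (X - C (c * lam i)) =
        X ^ n + ∑ i : Fin n, C (b i) * X ^ (i : ℕ))
    (m : ℕ) (hm : 0 < m) :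
    (IsMDS ((companion a) ^ m) ↔ IsMDS ((companion b) ^ m)) ∧
    (IsNMDSMatrix ((companion a) ^ m) ↔ IsNMDSMatrix ((companion b) ^ m)) := by
  classical
  set A := companion a with hA
  set B := companion b with hB
  have hab : ∀ j : Fin n, b j = c ^ (n - (j : ℕ)) * a j := b_eq lam c a b hg hgstar
  have hAB : ∀ i j, B i j = (c * c ^ (i : ℕ)) * A i j * (c ^ (j : ℕ))⁻¹ :=
    companion_entry a b c hc hab
  have hpowB : ∀ i j, (B ^ m) i j = (c ^ m * c ^ (i : ℕ)) * (A ^ m) i j * (c ^ (j : ℕ))⁻¹ :=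
    pow_entry A B c hc hAB m
  have hpowA : ∀ i j, (A ^ m) i j = ((c ^ m * c ^ (i : ℕ))⁻¹) * (B ^ m) i j * ((c ^ (j : ℕ))⁻¹)⁻¹ := by
    intro i j
    rw [hpowB i j, inv_inv]
    field_simp
  have hs : ∀ i : Fin n, c ^ m * c ^ (i : ℕ) ≠ 0 :=
    fun i => mul_ne_zero (pow_ne_zero _ hc) (pow_ne_zero _ hc)
  have ht : ∀ j : Fin n, (c ^ (j : ℕ))⁻¹ ≠ 0 := fun j => inv_ne_zero (pow_ne_zero _ hc)
  refine ⟨⟨fun h => ?_, fun h => ?_⟩, fun h => ?_, fun h => ?_⟩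
  · exact scale_MDS (A ^ m) (B ^ m) _ _ hs ht hpowB h
  · exact scale_MDS (B ^ m) (A ^ m) _ _ (fun i => inv_ne_zero (hs i)) (fun j => inv_ne_zero (ht j))
      hpowA h
  · exact scale_NMDS (A ^ m) (B ^ m) _ _ hs ht hpowB h
  · exact scale_NMDS (B ^ m) (A ^ m) _ _ (fun i => inv_ne_zero (hs i)) (fun j => inv_ne_zero (ht j))
      hpowA h
end
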